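/- arXiv:0805.0437 — 5 statements merged into one kernel-verified Lean document; each statement's English description precedes it below -/
import Mathlib

section
/- Let σ ⊆ N_ℝ be a d-dimensional simplicial rational cone with dual cone σ^∨ ⊆ M_ℝ. Any semigroup homomorphism φ: σ^∨ ∩ M → ℕ extends uniquely to a group homomorphism M → ℤ, which is of the form u ↦ ⟨u, v⟩ for a unique v ∈ σ ∩ N. -/
/-!
Strong convexity of `σ` yields a lattice point `u₀` that is strictly positive on every nonzero
generator of `σ`. Hence `u + k • u₀ ∈ σ^∨ ∩ M` for every `u ∈ M` and `k ≫ 0`, so `σ^∨ ∩ M`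
generates `M` as a group and `φ` extends uniquely to a homomorphism `M → ℤ`, that is, to
`u ↦ ⟨u, w⟩` for a unique `w ∈ N`. Finally `w ∈ σ` by Farkas' lemma: `σ` is closed (`u₀` bounds the
coefficients of its points), and a functional separating `w` from `σ` can be pushed into the
interior of `σ^∨` and then rounded to a lattice point of `σ^∨` that is negative on `w`.
-/

/-- The rational polyhedral cone generated by lattice vectors `g_1, …, g_m` in `ℝ^d`. -/
def rationalCone (d m : ℕ) (g : Fin m → Fin d → ℤ) : Set (Fin d → ℝ) :=
  {x | ∃ c : Fin m → ℝ, (∀ i, 0 ≤ c i) ∧ ∀ j, x j = ∑ i, c i * (g i j : ℝ)}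

open Matrix Set PointedCone

theorem Module.Dual.exists_eq_dotProduct {R n : Type*} [CommSemiring R] [Fintype n]
    (f : Module.Dual R (n → R)) : ∃ y : n → R, ∀ x, f x = y ⬝ᵥ x := by
  classical
  refine ⟨(dotProductEquiv R n).symm f, fun x => ?_⟩
  conv_lhs => rw [← (dotProductEquiv R n).apply_symm_apply f]
  rfl

theorem intCast_dotProduct_intCast {ι : Type*} [Fintype ι] (u w : ι → ℤ) :
    (Int.cast ∘ u : ι → ℝ) ⬝ᵥ (Int.cast ∘ w) = ((u ⬝ᵥ w : ℤ) : ℝ) :=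
  ((Int.castRingHom ℝ).map_dotProduct u w).symm

theorem intCast_comp_eq_zero {ι : Type*} {w : ι → ℤ} : (Int.cast ∘ w : ι → ℝ) = 0 ↔ w = 0 := by
  simp [funext_iff]

theorem AddSubmonoid.exists_addMonoidHom_extend {G H : Type*} [AddCommGroup G] [AddCommGroup H]
    {S : AddSubmonoid G} (hS : ∀ x, ∃ s ∈ S, ∃ t ∈ S, s - t = x) (φ : S →+ H) :
    ∃ ψ : G →+ H, ∀ s : S, ψ s = φ s := by
  choose s hs t ht hst using hS
  have key : ∀ {a b c d : S}, (a : G) - b = c - d → φ a - φ b = φ c - φ d := by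
    intro a b c d h
    rw [sub_eq_sub_iff_add_eq_add, ← map_add, ← map_add]
    exact congrArg φ (Subtype.ext (by simpa using sub_eq_sub_iff_add_eq_add.1 h))
  refine ⟨AddMonoidHom.mk' (fun x => φ ⟨s x, hs x⟩ - φ ⟨t x, ht x⟩) fun x y => ?_, fun a => ?_⟩
  · rw [sub_add_sub_comm, ← map_add, ← map_add]
    refine key ?_
    simp only [AddSubmonoid.coe_add, hst]
    rw [add_sub_add_comm, hst, hst]
  · simpa using key (a := ⟨s a, hs a⟩) (b := ⟨t a, ht a⟩) (c := a) (d := 0) (by simpa using hst a)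

section IntegerPoints

variable {ι : Type*} [Fintype ι]

theorem exists_intCast_mem_of_isOpen {U : Set (ι → ℝ)} (hU : IsOpen U)
    (hsmul : ∀ y ∈ U, ∀ t : ℝ, 0 < t → t • y ∈ U) (hne : U.Nonempty) :
    ∃ u : ι → ℤ, Int.cast ∘ u ∈ U := by
  obtain ⟨q, hq⟩ :=
    (DenseRange.piMap fun _ : ι => Rat.denseRange_cast (𝕜 := ℝ)).exists_mem_open hU hne
  set D : ℕ := ∏ j, (q j).den
  have hD : ∀ j, ∃ z : ℤ, (z : ℝ) = D * q j := fun j => by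
    obtain ⟨k, hk⟩ := Finset.dvd_prod_of_mem (fun j => (q j).den) (Finset.mem_univ j)
    have hnum : ((q j).num : ℝ) = q j * (q j).den := by
      exact_mod_cast (Rat.mul_den_eq_num (q j)).symm
    refine ⟨(q j).num * k, ?_⟩
    rw [show (D : ℝ) = (q j).den * k by exact_mod_cast hk]
    push_cast
    rw [hnum]
    ring
  choose u hu using hD
  refine ⟨u, ?_⟩
  convert hsmul _ hq (D : ℝ) (by positivity) using 1
  ext j
  simp [hu]

theorem exists_int_dotProduct_pos {S : Set (ι → ℝ)} (hS : S.Finite) {y : ι → ℝ}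
    (hy : ∀ a ∈ S, 0 < y ⬝ᵥ a) : ∃ u : ι → ℤ, ∀ a ∈ S, 0 < (Int.cast ∘ u) ⬝ᵥ a := by
  have hopen : IsOpen {z : ι → ℝ | ∀ a ∈ S, 0 < z ⬝ᵥ a} := by
    simp only [ofPred_forall]
    exact hS.isOpen_biInter fun a _ =>
      isOpen_lt continuous_const (continuous_id.dotProduct continuous_const)
  exact exists_intCast_mem_of_isOpen hopen
    (fun _ hz t ht a ha => by simpa [smul_dotProduct] using mul_pos ht (hz a ha)) ⟨y, hy⟩

end IntegerPoints

theorem PointedCone.convex_sdiff_zero_of_salient {E : Type*} [AddCommGroup E] [Module ℝ E]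
    {C : PointedCone ℝ E} (hC : (C : ConvexCone ℝ E).Salient) :
    Convex ℝ ((C : Set E) \ {0}) := by
  rintro x ⟨hxC, hx0⟩ y ⟨hyC, hy0⟩ a b ha hb hab
  refine ⟨C.convex hxC hyC ha hb hab, fun h0 => ?_⟩
  rcases ha.eq_or_lt with rfl | ha
  · simp_all
  · refine hC _ (C.smul_mem ha.le hxC) (smul_ne_zero ha.ne' hx0) ?_
    rw [neg_eq_of_add_eq_zero_right h0]
    exact C.smul_mem hb hyC

section RealCone

variable {ι κ : Type*} [Fintype ι] [Fintype κ] {v : κ → ι → ℝ}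

theorem PointedCone.forall_mem_hull_dotProduct_nonneg_iff {s : Set (ι → ℝ)} {y : ι → ℝ} :
    (∀ x ∈ hull ℝ s, 0 ≤ y ⬝ᵥ x) ↔ ∀ x ∈ s, 0 ≤ y ⬝ᵥ x :=
  SetLike.ext_iff.1 (dual_hull (p := (dotProductBilin ℝ ℝ).flip) s) y

theorem exists_dotProduct_pos_of_salient
    (hC : (hull ℝ (range v) : ConvexCone ℝ (ι → ℝ)).Salient) :
    ∃ y : ι → ℝ, ∀ i, v i ≠ 0 → 0 < y ⬝ᵥ v i := by
  set K := convexHull ℝ (range v \ {0})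
  have hK : K ⊆ (hull ℝ (range v) : Set (ι → ℝ)) \ {0} :=
    convexHull_min (sdiff_subset_sdiff_left subset_hull) (convex_sdiff_zero_of_salient hC)
  obtain ⟨f, s, hs, hfK⟩ := geometric_hahn_banach_point_closed (convex_convexHull ℝ _)
    ((finite_range v).sdiff.isCompact_convexHull ℝ).isClosed fun h => (hK h).2 rfl
  obtain ⟨y, hy⟩ : ∃ y, ∀ x, f x = y ⬝ᵥ x := Module.Dual.exists_eq_dotProduct f.toLinearMap
  refine ⟨y, fun i hi => ?_⟩
  have := hfK (v i) (subset_convexHull ℝ _ ⟨mem_range_self i, hi⟩)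
  rw [map_zero] at hs
  rw [hy] at this
  linarith

theorem isClosed_hull_of_one_le_dotProduct {y : ι → ℝ} (hy : ∀ i, v i ≠ 0 → 1 ≤ y ⬝ᵥ v i) :
    IsClosed (hull ℝ (range v) : Set (ι → ℝ)) := by
  classical
  set L : (κ → ℝ) → ι → ℝ := fun c => ∑ i, c i • v i
  have hL : Continuous L :=
    continuous_finsetSum _ fun i _ => (continuous_apply i).smul continuous_const
  have hLC : ∀ c, (∀ i, 0 ≤ c i) → L c ∈ hull ℝ (range v) := fun c hc =>
    sum_mem fun i _ => (hull ℝ (range v)).smul_mem (hc i) (subset_hull (mem_range_self i))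
  have hbound : ∀ x ∈ hull ℝ (range v), x ∈ L '' Icc 0 fun _ => y ⬝ᵥ x := by
    intro x hx
    obtain ⟨c, rfl⟩ := (Submodule.mem_span_range_iff_exists_fun _).1 hx
    set c' : κ → ℝ := fun i => if v i = 0 then 0 else c i
    have hc' : ∀ i, 0 ≤ c' i := fun i => by
      dsimp only [c']
      split_ifs
      exacts [le_rfl, (c i).2]
    have hc'y : ∀ i, c' i ≤ c' i * (y ⬝ᵥ v i) := fun i => by
      dsimp only [c']
      split_ifs with h
      exacts [by simp, le_mul_of_one_le_right (c i).2 (hy i h)]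
    have hLc' : L c' = ∑ i, c i • v i := Finset.sum_congr rfl fun i _ => by
      dsimp only [c']
      split_ifs with h <;> simp [h]
    refine ⟨c', ⟨hc', fun i => ?_⟩, hLc'⟩
    calc c' i ≤ c' i * (y ⬝ᵥ v i) := hc'y i
      _ ≤ ∑ j, c' j * (y ⬝ᵥ v j) :=
        Finset.single_le_sum (fun j _ => (hc' j).trans (hc'y j)) (Finset.mem_univ i)
      _ = y ⬝ᵥ L c' := by simp [L, dotProduct_sum, dotProduct_smul]
      _ = y ⬝ᵥ ∑ i, c i • v i := by rw [hLc']
  refine closure_subset_iff_isClosed.1 fun x hx => ?_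
  set R := y ⬝ᵥ x + 1
  have hO : IsOpen {z : ι → ℝ | y ⬝ᵥ z < R} :=
    isOpen_lt (continuous_const.dotProduct continuous_id) continuous_const
  have hK : IsClosed (L '' Icc 0 fun _ => R) := (isCompact_Icc.image hL).isClosed
  obtain ⟨c, hc, rfl⟩ : x ∈ L '' Icc 0 fun _ => R := by
    refine hK.closure_subset (closure_mono ?_ (hO.inter_closure ⟨by simp [R], hx⟩))
    rintro z ⟨hzR, hz⟩
    obtain ⟨c, hc, rfl⟩ := hbound z hz
    exact ⟨c, ⟨hc.1, hc.2.trans fun _ => hzR.le⟩, rfl⟩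
  exact hLC c hc.1

theorem PointedCone.exists_dotProduct_neg_of_notMem {C : PointedCone ℝ (ι → ℝ)}
    (hC : IsClosed (C : Set (ι → ℝ))) {x : ι → ℝ} (hx : x ∉ C) :
    ∃ y : ι → ℝ, (∀ z ∈ C, 0 ≤ y ⬝ᵥ z) ∧ y ⬝ᵥ x < 0 := by
  obtain ⟨f, hfC, hfx⟩ := ProperCone.hyperplane_separation_point ⟨C, hC⟩ hx
  obtain ⟨y, hy⟩ : ∃ y, ∀ x, f x = y ⬝ᵥ x := Module.Dual.exists_eq_dotProduct f.toLinearMap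
  exact ⟨y, fun z hz => hy z ▸ hfC z hz, hy x ▸ hfx⟩

end RealCone

section LatticeCone

variable {ι κ : Type*} [Fintype ι]

noncomputable abbrev latticeCone (g : κ → ι → ℤ) : PointedCone ℝ (ι → ℝ) :=
  hull ℝ (range fun i => (Int.cast ∘ g i : ι → ℝ))

/-- `σ^∨ ∩ M` for the cone `σ = latticeCone g`. -/
noncomputable def latticeDual (g : κ → ι → ℤ) : PointedCone ℤ (ι → ℤ) :=
  PointedCone.dual (dotProductBilin ℤ ℤ).flip (range g)

variable {g : κ → ι → ℤ}

theorem mem_latticeDual_iff {u : ι → ℤ} : u ∈ latticeDual g ↔ ∀ i, 0 ≤ u ⬝ᵥ g i := by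
  simp [latticeDual]

theorem mem_latticeDual_iff_forall_mem_latticeCone {u : ι → ℤ} :
    u ∈ latticeDual g ↔ ∀ x ∈ latticeCone g, 0 ≤ (Int.cast ∘ u) ⬝ᵥ x := by
  simp [mem_latticeDual_iff, forall_mem_hull_dotProduct_nonneg_iff, intCast_dotProduct_intCast]

variable [Fintype κ]

theorem exists_int_dotProduct_pos_of_salient
    (hC : (latticeCone g : ConvexCone ℝ (ι → ℝ)).Salient) :
    ∃ u₀ : ι → ℤ, ∀ i, g i ≠ 0 → 0 < u₀ ⬝ᵥ g i := by
  obtain ⟨y, hy⟩ := exists_dotProduct_pos_of_salient hC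
  obtain ⟨u₀, hu₀⟩ := exists_int_dotProduct_pos ((finite_range _).sdiff (t := {0})) (y := y) <| by
    rintro _ ⟨⟨i, rfl⟩, h0⟩
    exact hy i h0
  refine ⟨u₀, fun i hi => ?_⟩
  have := hu₀ _ ⟨mem_range_self i, intCast_comp_eq_zero.not.2 hi⟩
  rwa [intCast_dotProduct_intCast, Int.cast_pos] at this

theorem exists_sub_eq_of_salient (hC : (latticeCone g : ConvexCone ℝ (ι → ℝ)).Salient)
    (u : ι → ℤ) : ∃ s ∈ latticeDual g, ∃ t ∈ latticeDual g, s - t = u := by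
  obtain ⟨u₀, hu₀⟩ := exists_int_dotProduct_pos_of_salient hC
  set k : ℕ := ∑ i, (u ⬝ᵥ g i).natAbs
  have hk : ∀ i, |u ⬝ᵥ g i| ≤ k := fun i => by
    rw [Int.abs_eq_natAbs]
    exact_mod_cast Finset.single_le_sum (f := fun i => (u ⬝ᵥ g i).natAbs)
      (fun _ _ => Nat.zero_le _) (Finset.mem_univ i)
  have hshift : ∀ i, 0 ≤ (u + k • u₀) ⬝ᵥ g i ∧ 0 ≤ (k • u₀) ⬝ᵥ g i := fun i => by
    rcases eq_or_ne (g i) 0 with h | h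
    · simp [h]
    · have h1 : 1 ≤ u₀ ⬝ᵥ g i := hu₀ i h
      have h2 := neg_abs_le (u ⬝ᵥ g i)
      rw [add_dotProduct, smul_dotProduct, nsmul_eq_mul]
      constructor <;> nlinarith [hk i]
  exact ⟨u + k • u₀, mem_latticeDual_iff.2 fun i => (hshift i).1,
    k • u₀, mem_latticeDual_iff.2 fun i => (hshift i).2, add_sub_cancel_right _ _⟩

theorem exists_mem_latticeDual_dotProduct_neg
    (hC : (latticeCone g : ConvexCone ℝ (ι → ℝ)).Salient)
    {x y : ι → ℝ} (hy : ∀ i, 0 ≤ y ⬝ᵥ (Int.cast ∘ g i)) (hyx : y ⬝ᵥ x < 0) :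
    ∃ u ∈ latticeDual g, (Int.cast ∘ u) ⬝ᵥ x < 0 := by
  obtain ⟨u₀, hu₀⟩ := exists_int_dotProduct_pos_of_salient hC
  -- `N • y + u₀` lies in the interior of the dual cone and is still negative on `x`
  obtain ⟨N, hN⟩ := exists_nat_gt ((Int.cast ∘ u₀) ⬝ᵥ x / -(y ⬝ᵥ x))
  set y' := (N : ℝ) • y + Int.cast ∘ u₀
  have hy'x : y' ⬝ᵥ x < 0 := by
    rw [div_lt_iff₀ (neg_pos.2 hyx)] at hN
    simp only [y', add_dotProduct, smul_dotProduct, smul_eq_mul]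
    linarith
  have hpos : ∀ a ∈ insert (-x) (range (fun i => (Int.cast ∘ g i : ι → ℝ)) \ {0}),
      0 < y' ⬝ᵥ a := by
    rintro a (rfl | ⟨⟨i, rfl⟩, hi⟩)
    · simpa [dotProduct_neg] using hy'x
    · have hgi : 0 < u₀ ⬝ᵥ g i := hu₀ i fun h => hi (intCast_comp_eq_zero.2 h)
      simp only [y', add_dotProduct, smul_dotProduct, smul_eq_mul, intCast_dotProduct_intCast]
      exact add_pos_of_nonneg_of_pos (mul_nonneg N.cast_nonneg (hy i)) (by exact_mod_cast hgi)
  obtain ⟨u, hu⟩ := exists_int_dotProduct_pos (((finite_range _).sdiff (t := {0})).insert _) hpos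
  refine ⟨u, mem_latticeDual_iff.2 fun i => ?_, by simpa using hu (-x) (mem_insert _ _)⟩
  rcases eq_or_ne (g i) 0 with h | h
  · simp [h]
  · have := hu _ (mem_insert_of_mem _ ⟨mem_range_self i, intCast_comp_eq_zero.not.2 h⟩)
    rw [intCast_dotProduct_intCast, Int.cast_pos] at this
    exact this.le

theorem mem_latticeCone_of_forall_latticeDual
    (hC : (latticeCone g : ConvexCone ℝ (ι → ℝ)).Salient)
    {x : ι → ℝ} (hx : ∀ u ∈ latticeDual g, 0 ≤ (Int.cast ∘ u) ⬝ᵥ x) : x ∈ latticeCone g := by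
  obtain ⟨u₀, hu₀⟩ := exists_int_dotProduct_pos_of_salient hC
  have hclosed := isClosed_hull_of_one_le_dotProduct (y := Int.cast ∘ u₀) fun i hi => by
    rw [intCast_dotProduct_intCast]
    exact_mod_cast hu₀ i fun h => hi (intCast_comp_eq_zero.2 h)
  by_contra hxC
  obtain ⟨y, hy, hyx⟩ := exists_dotProduct_neg_of_notMem hclosed hxC
  obtain ⟨u, hu, hux⟩ := exists_mem_latticeDual_dotProduct_neg hC
    (fun i => hy _ (subset_hull (mem_range_self i))) hyx
  exact (hx u hu).not_gt hux

end LatticeCone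

theorem rationalCone_eq_latticeCone {d m : ℕ} (g : Fin m → Fin d → ℤ) :
    rationalCone d m g = latticeCone g := by
  ext x
  rw [SetLike.mem_coe, Submodule.mem_span_range_iff_exists_fun]
  constructor
  · rintro ⟨c, hc, hx⟩
    exact ⟨fun i => ⟨c i, hc i⟩, funext fun j => by simp [hx j, Finset.sum_apply]⟩
  · rintro ⟨c, rfl⟩
    exact ⟨fun i => c i, fun i => (c i).2,
      fun j => by simp [Finset.sum_apply, ← Nonneg.coe_smul]⟩

theorem stmt_5_general (d m : ℕ) (g : Fin m → Fin d → ℤ)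
    -- `σ` is strongly convex
    (hconv : ∀ x ∈ rationalCone d m g, -x ∈ rationalCone d m g → x = 0)
    (φ : (Fin d → ℤ) → ℕ)
    -- `φ` is a semigroup homomorphism on `σ^∨ ∩ M`
    (hφ : ∀ u u' : Fin d → ℤ,
      (∀ x ∈ rationalCone d m g, 0 ≤ ∑ j, (u j : ℝ) * x j) →
      (∀ x ∈ rationalCone d m g, 0 ≤ ∑ j, (u' j : ℝ) * x j) →
      φ (u + u') = φ u + φ u') :
    ∃! w : Fin d → ℤ,
      (fun j => (w j : ℝ)) ∈ rationalCone d m g ∧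
      ∀ u : Fin d → ℤ, (∀ x ∈ rationalCone d m g, 0 ≤ ∑ j, (u j : ℝ) * x j) →
        (φ u : ℤ) = ∑ j, u j * w j := by
  rw [rationalCone_eq_latticeCone] at hconv hφ ⊢
  have hC : (latticeCone g : ConvexCone ℝ (Fin d → ℝ)).Salient :=
    fun x hx hx0 hnx => hx0 (hconv x hx hnx)
  have hdual (u : Fin d → ℤ) := (mem_latticeDual_iff_forall_mem_latticeCone (g := g) (u := u)).symm
  let φ' : (latticeDual g).toAddSubmonoid →+ ℤ := AddMonoidHom.mk' (fun u => φ u) fun u u' => by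
    simp [hφ u u' ((hdual u).2 u.2) ((hdual u').2 u'.2)]
  obtain ⟨ψ, hψ⟩ := AddSubmonoid.exists_addMonoidHom_extend (exists_sub_eq_of_salient hC) φ'
  obtain ⟨w, hw⟩ := Module.Dual.exists_eq_dotProduct ψ.toIntLinearMap
  have hφw : ∀ u ∈ latticeDual g, (φ u : ℤ) = u ⬝ᵥ w := fun u hu => by
    rw [dotProduct_comm, ← hw]
    exact (hψ ⟨u, hu⟩).symm
  refine ⟨w, ⟨mem_latticeCone_of_forall_latticeDual hC fun u hu => ?_,
    fun u hu => hφw u ((hdual u).1 hu)⟩, ?_⟩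
  · change 0 ≤ (Int.cast ∘ u) ⬝ᵥ (Int.cast ∘ w)
    rw [intCast_dotProduct_intCast, ← hφw u hu]
    positivity
  · rintro w' ⟨-, hw'⟩
    have hagree : ∀ v ∈ latticeDual g, v ⬝ᵥ w' = v ⬝ᵥ w := fun v hv =>
      (hw' v ((hdual v).2 hv)).symm.trans (hφw v hv)
    refine dotProduct_eq _ _ fun u => ?_
    obtain ⟨s, hs, t, ht, rfl⟩ := exists_sub_eq_of_salient hC u
    rw [dotProduct_comm w', dotProduct_comm w, sub_dotProduct, sub_dotProduct, hagree s hs,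
      hagree t ht]

/-- Let `σ ⊆ ℝ^d` be a full-dimensional strongly convex rational cone, with
dual cone `σ^∨`.  Any semigroup homomorphism `φ : σ^∨ ∩ M → ℕ` extends uniquely to a group
homomorphism `M → ℤ`, which is of the form `u ↦ ⟨u, v⟩` for a unique `v ∈ σ ∩ N`. -/
theorem stmt_5 (d m : ℕ) (g : Fin m → Fin d → ℤ)
    -- `σ` is full-dimensional
    (hfull : Submodule.span ℝ (Set.range fun i => fun j => (g i j : ℝ)) = ⊤)
    -- `σ` is strongly convex
    (hconv : ∀ x ∈ rationalCone d m g, -x ∈ rationalCone d m g → x = 0)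
    (φ : (Fin d → ℤ) → ℕ)
    -- `φ` is a semigroup homomorphism on `σ^∨ ∩ M`
    (hφ : ∀ u u' : Fin d → ℤ,
      (∀ x ∈ rationalCone d m g, 0 ≤ ∑ j, (u j : ℝ) * x j) →
      (∀ x ∈ rationalCone d m g, 0 ≤ ∑ j, (u' j : ℝ) * x j) →
      φ (u + u') = φ u + φ u')
    (hφ0 : φ 0 = 0) :
    ∃! w : Fin d → ℤ,
      (fun j => (w j : ℝ)) ∈ rationalCone d m g ∧
      ∀ u : Fin d → ℤ, (∀ x ∈ rationalCone d m g, 0 ≤ ∑ j, (u j : ℝ) * x j) →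
        (φ u : ℤ) = ∑ j, u j * w j :=
  stmt_5_general d m g hconv φ hφ
end

section
/- Let Q be the polyhedral complex {v ∈ |Σ| : ψ(v) ≤ 1} in N_ℝ and f_Q(m) = #(mQ ∩ N) the number of lattice points in the m-th dilate. Then f_Q(m) is a polynomial in m of degree d, and there is a polynomial δ_Q(t) of degree at most d with 1 + Σ_{m≥1} f_Q(m) t^m = δ_Q(t)/(1−t)^{d+1}. -/
/-!
Every lattice point `w` lies in the relative interior of exactly one cone `σ` of the fan,
and there it decomposes uniquely as `w = u + ∑_{i ∈ σ} n_i b_i` with `n_i ∈ ℕ` and `u` a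
lattice point of the half-open box `{∑_{i ∈ σ} t_i b_i : 0 < t_i ≤ 1}`. As `ψ` is linear
on `σ` with `ψ(b_i) = 1`, `ψ(w) = ψ(u) + ∑ n_i`, so `ψ(w) ≤ m` iff `⌈ψ(u)⌉ + ∑ n_i ≤ m`.
Hence `f_Q(m) = ∑_σ ∑_u binom(m + |σ| - ⌈ψ(u)⌉, |σ|)` with `⌈ψ(u)⌉ ≤ |σ| ≤ d`: each
summand is a polynomial in `m` of degree `|σ|`, with generating function
`t^⌈ψ(u)⌉ / (1 - t)^(|σ| + 1)`. Some cone is `d`-dimensional, because finitely many proper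
subspaces do not cover `ℝ^d`, so the degree is exactly `d`.
-/

/-- The cone spanned by the rays indexed by `σ`. -/
def coneOf (d r : ℕ) (v : Fin r → Fin d → ℤ) (σ : Finset (Fin r)) : Set (Fin d → ℝ) :=
  {x | ∃ c : Fin r → ℝ, (∀ i, 0 ≤ c i) ∧ (∀ i ∉ σ, c i = 0) ∧
    ∀ j, x j = ∑ i, c i * (v i j : ℝ)}

open Finset

theorem Finset.card_piAntidiag_nat {ι : Type*} [DecidableEq ι] (s : Finset ι) (n : ℕ) :
    #(s.piAntidiag n) = (#s).multichoose n := by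
  rw [← card_finsuppAntidiag_nat_eq_multichoose]
  simp [finsuppAntidiag]

theorem card_biUnion_range_piAntidiag {ι : Type*} [DecidableEq ι] [DecidableEq (ι → ℕ)]
    (s : Finset ι) {k : ℕ} (hk : k ≤ #s) (m : ℕ) :
    #((range (m + 1 - k)).biUnion s.piAntidiag) = (m + #s - k).choose #s := by
  rw [card_biUnion fun j _ j' _ hjj' => disjoint_left.2 fun n hj hj' =>
    hjj' ((mem_piAntidiag.1 hj).1.symm.trans (mem_piAntidiag.1 hj').1)]
  simp_rw [card_piAntidiag_nat]
  rcases le_or_gt k m with hkm | hmk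
  · rw [show m + 1 - k = m - k + 1 by omega, Nat.sum_range_multichoose,
      show m + #s - k = m - k + #s by omega]
  · rw [show m + 1 - k = 0 by omega, range_zero, sum_empty,
      Nat.choose_eq_zero_of_lt (by omega)]

namespace Polynomial

noncomputable def choosePoly (s j : ℕ) : ℚ[X] :=
  C (s.factorial : ℚ)⁻¹ * (descPochhammer ℚ s).comp (X + C (j : ℚ))

theorem eval_choosePoly (s j m : ℕ) :
    (choosePoly s j).eval (m : ℚ) = ((m + j).choose s : ℚ) := by
  rw [choosePoly, eval_mul, eval_C, eval_comp, eval_add, eval_X, eval_C, ← Nat.cast_add,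
    Nat.cast_choose_eq_descPochhammer_div, inv_mul_eq_div]

theorem natDegree_descPochhammer_comp_X_add_C (s j : ℕ) :
    ((descPochhammer ℚ s).comp (X + C (j : ℚ))).natDegree = s := by
  rw [natDegree_comp, descPochhammer_natDegree, natDegree_X_add_C, mul_one]

theorem natDegree_choosePoly (s j : ℕ) : (choosePoly s j).natDegree = s := by
  rw [choosePoly, natDegree_C_mul (by positivity), natDegree_descPochhammer_comp_X_add_C]

theorem coeff_choosePoly_self (s j : ℕ) : (choosePoly s j).coeff s = (s.factorial : ℚ)⁻¹ := by
  have h := ((monic_descPochhammer ℚ s).comp_X_add_C (j : ℚ)).coeff_natDegree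
  rw [natDegree_descPochhammer_comp_X_add_C] at h
  rw [choosePoly, coeff_C_mul, h, mul_one]

end Polynomial

theorem PowerSeries.mk_choose_mul_one_sub_X_pow {R : Type*} [CommRing R] {k s d : ℕ}
    (hks : k ≤ s) (hsd : s ≤ d) :
    PowerSeries.mk (fun m => ((m + s - k).choose s : R)) * (1 - PowerSeries.X) ^ (d + 1) =
      PowerSeries.X ^ k * (1 - PowerSeries.X) ^ (d - s) := by
  have hmk : PowerSeries.mk (fun m => ((m + s - k).choose s : R)) =
      PowerSeries.X ^ k * PowerSeries.mk fun n => ((s + n).choose s : R) := by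
    ext m
    rw [PowerSeries.coeff_mk, PowerSeries.coeff_X_pow_mul', PowerSeries.coeff_mk]
    split_ifs with hkm
    · congr 2; omega
    · rw [Nat.choose_eq_zero_of_lt (by omega), Nat.cast_zero]
  rw [hmk, show d + 1 = (s + 1) + (d - s) by omega, pow_add, mul_assoc,
    ← mul_assoc (PowerSeries.mk _), PowerSeries.mk_add_choose_mul_one_sub_pow_eq_one, one_mul]

section EhrhartSum

open Polynomial

variable {ι : Type*} (J : Finset ι) (s k : ι → ℕ) {d : ℕ}

theorem exists_degree_eq_eval_eq_sum_choose (hks : ∀ x ∈ J, k x ≤ s x)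
    (hsd : ∀ x ∈ J, s x ≤ d) (hfull : ∃ x ∈ J, s x = d) :
    ∃ p : ℚ[X], p.degree = d ∧
      ∀ m : ℕ, p.eval (m : ℚ) = ∑ x ∈ J, ((m + s x - k x).choose (s x) : ℚ) := by
  refine ⟨∑ x ∈ J, choosePoly (s x) (s x - k x), degree_eq_of_le_of_coeff_ne_zero ?_ ?_,
    fun m => ?_⟩
  · exact degree_le_of_natDegree_le <| natDegree_sum_le_of_forall_le _ _ fun x hx =>
      (natDegree_choosePoly _ _).trans_le (hsd x hx)
  · obtain ⟨x₀, hx₀, hs₀⟩ := hfull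
    rw [finsetSum_coeff]
    refine (sum_pos' (fun x hx => ?_) ⟨x₀, hx₀, ?_⟩).ne'
    · rcases (hsd x hx).lt_or_eq with hlt | rfl
      · rw [coeff_eq_zero_of_natDegree_lt ((natDegree_choosePoly _ _).trans_lt hlt)]
      · rw [coeff_choosePoly_self]; positivity
    · rw [← hs₀, coeff_choosePoly_self]; positivity
  · rw [eval_finsetSum]
    exact sum_congr rfl fun x hx => by
      rw [eval_choosePoly, show m + (s x - k x) = m + s x - k x by have := hks x hx; omega]

theorem exists_degree_le_mk_sum_choose_mul_eq (hks : ∀ x ∈ J, k x ≤ s x)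
    (hsd : ∀ x ∈ J, s x ≤ d) :
    ∃ δ : ℚ[X], δ.degree ≤ d ∧
      PowerSeries.mk (fun m => ∑ x ∈ J, ((m + s x - k x).choose (s x) : ℚ)) *
        (1 - PowerSeries.X) ^ (d + 1) = (δ : PowerSeries ℚ) := by
  refine ⟨∑ x ∈ J, X ^ k x * (1 - X) ^ (d - s x), ?_, ?_⟩
  · refine degree_le_of_natDegree_le <| natDegree_sum_le_of_forall_le _ _ fun x hx => ?_
    have h1X : ((1 : ℚ[X]) - X).natDegree ≤ 1 := (natDegree_sub_le _ _).trans (by simp)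
    calc (X ^ k x * (1 - X) ^ (d - s x) : ℚ[X]).natDegree
        ≤ k x + (d - s x) * 1 := natDegree_mul_le.trans
          (add_le_add (natDegree_X_pow_le _) (natDegree_pow_le_of_le _ h1X))
      _ ≤ d := by have := hks x hx; have := hsd x hx; omega
  · have hmk : PowerSeries.mk (fun m => ∑ x ∈ J, ((m + s x - k x).choose (s x) : ℚ)) =
        ∑ x ∈ J, PowerSeries.mk fun m => ((m + s x - k x).choose (s x) : ℚ) := by
      ext m; simp [map_sum]
    rw [hmk, sum_mul, sum_congr rfl fun x hx =>
      PowerSeries.mk_choose_mul_one_sub_X_pow (hks x hx) (hsd x hx),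
      ← coeToPowerSeries.ringHom_apply, map_sum]
    simp [coeToPowerSeries.ringHom_apply]

end EhrhartSum

theorem sub_natCast_ceil_pred_mem_Ioc {x : ℝ} (hx : 0 < x) :
    x - ((⌈x⌉₊ - 1 : ℕ) : ℝ) ∈ Set.Ioc 0 1 := by
  rw [Nat.cast_sub (Nat.one_le_iff_ne_zero.2 (Nat.ceil_pos.2 hx).ne'), Nat.cast_one]
  exact ⟨by linarith [Nat.ceil_lt_add_one hx.le], by linarith [Nat.le_ceil x]⟩

theorem eq_of_add_natCast_eq {t t' : ℝ} {n n' : ℕ} (ht : t ∈ Set.Ioc 0 1)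
    (ht' : t' ∈ Set.Ioc 0 1) (h : t + n = t' + n') : n = n' := by
  have h₁ : n < n' + 1 := by exact_mod_cast (by linarith [ht.1, ht'.2] : (n : ℝ) < n' + 1)
  have h₂ : n' < n + 1 := by exact_mod_cast (by linarith [ht.2, ht'.1] : (n' : ℝ) < n + 1)
  omega

section Fan

variable {d r : ℕ}

def castVec : (Fin d → ℤ) →+ (Fin d → ℝ) := (Int.castAddHom ℝ).compLeft (Fin d)

theorem castVec_injective : Function.Injective (castVec : (Fin d → ℤ) → Fin d → ℝ) :=
  fun _ _ h => funext fun j => Int.cast_injective (congr_fun h j)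

variable (v : Fin r → Fin d → ℤ) (a : Fin r → ℕ)

def rayVec (i : Fin r) : Fin d → ℝ := (a i : ℝ) • castVec (v i)

def openCone (σ : Finset (Fin r)) : Set (Fin d → ℝ) :=
  {x | ∃ e : Fin r → ℝ, (∀ i ∈ σ, 0 < e i) ∧ x = ∑ i ∈ σ, e i • rayVec v a i}

def halfOpenBox (σ : Finset (Fin r)) : Set (Fin d → ℤ) :=
  {u | ∃ t : Fin r → ℝ, (∀ i ∈ σ, t i ∈ Set.Ioc 0 1) ∧
    castVec u = ∑ i ∈ σ, t i • rayVec v a i}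

def addRays (σ : Finset (Fin r)) (u : Fin d → ℤ) (n : Fin r → ℕ) : Fin d → ℤ :=
  u + ∑ i ∈ σ, (n i * a i) • v i

variable {v a} {σ : Finset (Fin r)}

theorem castVec_addRays (u : Fin d → ℤ) (n : Fin r → ℕ) :
    castVec (addRays v a σ u n) = castVec u + ∑ i ∈ σ, (n i : ℝ) • rayVec v a i := by
  rw [addRays, map_add, map_sum]
  refine congrArg _ (sum_congr rfl fun i _ => ?_)
  rw [map_nsmul, rayVec, smul_smul, ← Nat.cast_mul, Nat.cast_smul_eq_nsmul]

theorem sum_smul_rayVec_mem_coneOf {e : Fin r → ℝ} (he : ∀ i ∈ σ, 0 ≤ e i) :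
    ∑ i ∈ σ, e i • rayVec v a i ∈ coneOf d r v σ := by
  refine ⟨fun i => if i ∈ σ then e i * a i else 0, fun i => ?_, fun i hi => if_neg hi,
    fun j => ?_⟩
  · dsimp only
    split_ifs with hi
    exacts [mul_nonneg (he i hi) (Nat.cast_nonneg _), le_rfl]
  · simp [rayVec, castVec, Finset.sum_apply, ite_mul, mul_assoc]

theorem exists_sum_smul_rayVec_of_mem_coneOf (ha : ∀ i, 0 < a i) {x : Fin d → ℝ}
    (hx : x ∈ coneOf d r v σ) :
    ∃ e : Fin r → ℝ, (∀ i ∈ σ, 0 ≤ e i) ∧ x = ∑ i ∈ σ, e i • rayVec v a i := by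
  obtain ⟨c, hc, hsupp, hx⟩ := hx
  refine ⟨fun i => c i / a i, fun i _ => div_nonneg (hc i) (Nat.cast_nonneg _),
    funext fun j => ?_⟩
  rw [hx j, ← sum_subset (subset_univ σ) fun i _ hi => by rw [hsupp i hi, zero_mul]]
  simp only [rayVec, castVec, Finset.sum_apply]
  exact sum_congr rfl fun i _ => by
    rw [smul_smul, div_mul_cancel₀ _ (Nat.cast_pos.2 (ha i)).ne']
    rfl

theorem openCone_subset_coneOf : openCone v a σ ⊆ coneOf d r v σ := by
  rintro _ ⟨e, he, rfl⟩
  exact sum_smul_rayVec_mem_coneOf fun i hi => (he i hi).le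

theorem psi_sum_smul_rayVec {ψ : (Fin d → ℝ) → ℝ} {ℓ : (Fin d → ℝ) →ₗ[ℝ] ℝ}
    (hℓ : ∀ x ∈ coneOf d r v σ, ψ x = ℓ x) (hψb : ∀ i, ψ (rayVec v a i) = 1) {e : Fin r → ℝ}
    (he : ∀ i ∈ σ, 0 ≤ e i) : ψ (∑ i ∈ σ, e i • rayVec v a i) = ∑ i ∈ σ, e i := by
  have hray : ∀ i ∈ σ, ℓ (rayVec v a i) = 1 := fun i hi => by
    have hmem := sum_smul_rayVec_mem_coneOf (v := v) (a := a) (σ := σ)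
      (e := fun j => if j = i then 1 else 0) fun j _ => by split_ifs <;> norm_num
    simp only [ite_smul, one_smul, zero_smul, sum_ite_eq', if_pos hi] at hmem
    rw [← hℓ _ hmem, hψb]
  rw [hℓ _ (sum_smul_rayVec_mem_coneOf he), map_sum]
  exact sum_congr rfl fun i hi => by rw [map_smul, hray i hi, smul_eq_mul, mul_one]

theorem linearIndepOn_rayVec (ha : ∀ i, 0 < a i)
    (hind : LinearIndepOn ℝ (fun i => castVec (v i)) (σ : Set (Fin r))) :
    LinearIndepOn ℝ (rayVec v a) (σ : Set (Fin r)) :=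
  hind.units_smul fun i => Units.mk0 (a i : ℝ) (Nat.cast_ne_zero.2 (ha i).ne')

theorem card_le_of_linearIndepOn
    (hind : LinearIndepOn ℝ (fun i => castVec (v i)) (σ : Set (Fin r))) : #σ ≤ d := by
  simpa using hind.fintype_card_le_finrank

theorem exists_mem_openCone (ha : ∀ i, 0 < a i) {cones : Finset (Finset (Fin r))}
    (hdown : ∀ σ ∈ cones, ∀ τ ⊆ σ, τ ∈ cones)
    (hcomplete : ∀ x : Fin d → ℝ, ∃ σ ∈ cones, x ∈ coneOf d r v σ) (x : Fin d → ℝ) :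
    ∃ σ ∈ cones, x ∈ openCone v a σ := by
  obtain ⟨σ, hσ, hx⟩ := hcomplete x
  obtain ⟨e, he, rfl⟩ := exists_sum_smul_rayVec_of_mem_coneOf ha hx
  refine ⟨σ.filter (0 < e ·), hdown σ hσ _ (filter_subset _ _), e,
    fun i hi => (mem_filter.1 hi).2, ?_⟩
  rw [sum_filter]
  refine sum_congr rfl fun i hi => ?_
  split_ifs with hpos
  · rfl
  · rw [le_antisymm (not_lt.1 hpos) (he i hi), zero_smul]

theorem subset_of_mem_openCone_of_mem_coneOf (ha : ∀ i, 0 < a i)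
    (hind : LinearIndepOn ℝ (rayVec v a) (σ : Set (Fin r))) {ρ : Finset (Fin r)} (hρ : ρ ⊆ σ)
    {x : Fin d → ℝ} (hx : x ∈ openCone v a σ) (hx' : x ∈ coneOf d r v ρ) : σ ⊆ ρ := by
  obtain ⟨e, he, rfl⟩ := hx
  obtain ⟨e', -, hx'⟩ := exists_sum_smul_rayVec_of_mem_coneOf ha hx'
  have hext : ∑ i ∈ ρ, e' i • rayVec v a i =
      ∑ i ∈ σ, (if i ∈ ρ then e' i else 0) • rayVec v a i := by
    rw [← sum_subset hρ fun i _ hi => by rw [if_neg hi, zero_smul]]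
    exact sum_congr rfl fun i hi => by rw [if_pos hi]
  intro i hi
  by_contra hiρ
  have := linearIndepOn_finset_iffₛ.mp hind _ _ (hx'.trans hext) i hi
  rw [if_neg hiρ] at this
  exact (he i hi).ne' this

theorem eq_of_mem_openCone (ha : ∀ i, 0 < a i) {τ : Finset (Fin r)}
    (hindσ : LinearIndepOn ℝ (rayVec v a) (σ : Set (Fin r)))
    (hindτ : LinearIndepOn ℝ (rayVec v a) (τ : Set (Fin r)))
    (hfan : coneOf d r v σ ∩ coneOf d r v τ = coneOf d r v (σ ∩ τ)) {x : Fin d → ℝ}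
    (hxσ : x ∈ openCone v a σ) (hxτ : x ∈ openCone v a τ) : σ = τ := by
  have hx : x ∈ coneOf d r v (σ ∩ τ) :=
    hfan ▸ ⟨openCone_subset_coneOf hxσ, openCone_subset_coneOf hxτ⟩
  exact ((subset_of_mem_openCone_of_mem_coneOf ha hindσ inter_subset_left hxσ hx).trans
    inter_subset_right).antisymm
    ((subset_of_mem_openCone_of_mem_coneOf ha hindτ inter_subset_right hxτ hx).trans
      inter_subset_left)

variable (v a σ) in
theorem halfOpenBox_finite : (halfOpenBox v a σ).Finite := by
  set R := ∑ i ∈ σ, ‖rayVec v a i‖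
  refine (Set.finite_Icc (fun _ => -⌈R⌉) fun _ => ⌈R⌉).subset fun u ⟨t, ht, hu⟩ => ?_
  have hnorm : ‖castVec u‖ ≤ R := hu ▸ (norm_sum_le _ _).trans (sum_le_sum fun i hi => by
    rw [norm_smul, Real.norm_of_nonneg (ht i hi).1.le]
    exact mul_le_of_le_one_left (norm_nonneg _) (ht i hi).2)
  have hcoord : ∀ j, |u j| ≤ ⌈R⌉ := fun j => by
    have h : |(u j : ℝ)| ≤ ⌈R⌉ :=
      ((norm_le_pi_norm (castVec u) j).trans hnorm).trans (Int.le_ceil R)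
    exact_mod_cast h
  exact ⟨fun j => (abs_le.1 (hcoord j)).1, fun j => (abs_le.1 (hcoord j)).2⟩

variable (v a σ) in
theorem halfOpenBox_nonempty : (halfOpenBox v a σ).Nonempty :=
  ⟨addRays v a σ 0 1, fun _ => 1, fun _ _ => ⟨one_pos, le_rfl⟩, by simp [castVec_addRays]⟩

variable {ψ : (Fin d → ℝ) → ℝ} {ℓ : (Fin d → ℝ) →ₗ[ℝ] ℝ}

theorem psi_mem_Icc_of_mem_halfOpenBox (hℓ : ∀ x ∈ coneOf d r v σ, ψ x = ℓ x)
    (hψb : ∀ i, ψ (rayVec v a i) = 1) {u : Fin d → ℤ} (hu : u ∈ halfOpenBox v a σ) :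
    ψ (castVec u) ∈ Set.Icc 0 (#σ : ℝ) := by
  obtain ⟨t, ht, htu⟩ := hu
  rw [htu, psi_sum_smul_rayVec hℓ hψb fun i hi => (ht i hi).1.le]
  exact ⟨sum_nonneg fun i hi => (ht i hi).1.le,
    (sum_le_sum fun i hi => (ht i hi).2).trans_eq (by simp)⟩

theorem ceil_psi_le_card_of_mem_halfOpenBox (hℓ : ∀ x ∈ coneOf d r v σ, ψ x = ℓ x)
    (hψb : ∀ i, ψ (rayVec v a i) = 1) {u : Fin d → ℤ} (hu : u ∈ halfOpenBox v a σ) :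
    ⌈ψ (castVec u)⌉₊ ≤ #σ :=
  Nat.ceil_le.2 (psi_mem_Icc_of_mem_halfOpenBox hℓ hψb hu).2

theorem ceil_psi_castVec_addRays (hℓ : ∀ x ∈ coneOf d r v σ, ψ x = ℓ x)
    (hψb : ∀ i, ψ (rayVec v a i) = 1) {u : Fin d → ℤ} (hu : u ∈ halfOpenBox v a σ)
    (n : Fin r → ℕ) :
    ⌈ψ (castVec (addRays v a σ u n))⌉₊ = ⌈ψ (castVec u)⌉₊ + ∑ i ∈ σ, n i := by
  have hψu := psi_mem_Icc_of_mem_halfOpenBox hℓ hψb hu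
  obtain ⟨t, ht, htu⟩ := hu
  have hψ : ψ (castVec (addRays v a σ u n)) = ψ (castVec u) + ∑ i ∈ σ, n i := by
    rw [castVec_addRays, htu, ← sum_add_distrib]
    simp_rw [← add_smul]
    rw [psi_sum_smul_rayVec hℓ hψb fun i hi => by positivity [(ht i hi).1],
      psi_sum_smul_rayVec hℓ hψb fun i hi => (ht i hi).1.le, sum_add_distrib, Nat.cast_sum]
  rw [hψ, Nat.ceil_add_natCast hψu.1]

theorem mem_openCone_iff_exists_addRays {w : Fin d → ℤ} :
    castVec w ∈ openCone v a σ ↔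
      ∃ u ∈ halfOpenBox v a σ, ∃ n : Fin r → ℕ,
        (∀ i ∉ σ, n i = 0) ∧ addRays v a σ u n = w := by
  constructor
  · rintro ⟨e, he, hw⟩
    set n : Fin r → ℕ := fun i => if i ∈ σ then ⌈e i⌉₊ - 1 else 0
    set u := w - ∑ i ∈ σ, (n i * a i) • v i
    have hwu : addRays v a σ u n = w := sub_add_cancel _ _
    refine ⟨u, ⟨fun i => e i - n i, fun i hi => ?_, ?_⟩, n, fun i hi => if_neg hi, hwu⟩
    · simpa only [n, if_pos hi] using sub_natCast_ceil_pred_mem_Ioc (he i hi)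
    · have := castVec_addRays (v := v) (a := a) (σ := σ) u n
      rw [hwu, hw] at this
      simp_rw [sub_smul, sum_sub_distrib, this, add_sub_cancel_right]
  · rintro ⟨u, ⟨t, ht, htu⟩, n, -, rfl⟩
    refine ⟨fun i => t i + n i, fun i hi => by positivity [(ht i hi).1], ?_⟩
    rw [castVec_addRays, htu, ← sum_add_distrib]
    simp_rw [add_smul]

theorem eq_of_addRays_eq (hind : LinearIndepOn ℝ (rayVec v a) (σ : Set (Fin r)))
    {u u' : Fin d → ℤ} (hu : u ∈ halfOpenBox v a σ) (hu' : u' ∈ halfOpenBox v a σ)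
    {n n' : Fin r → ℕ} (h : addRays v a σ u n = addRays v a σ u' n') :
    u = u' ∧ ∀ i ∈ σ, n i = n' i := by
  obtain ⟨t, ht, htu⟩ := hu
  obtain ⟨t', ht', htu'⟩ := hu'
  have hsum := congrArg castVec h
  rw [castVec_addRays, castVec_addRays, htu, htu', ← sum_add_distrib, ← sum_add_distrib]
    at hsum
  simp_rw [← add_smul] at hsum
  have hn : ∀ i ∈ σ, n i = n' i := fun i hi =>
    eq_of_add_natCast_eq (ht i hi) (ht' i hi) (linearIndepOn_finset_iffₛ.mp hind _ _ hsum i hi)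
  refine ⟨?_, hn⟩
  rwa [addRays, addRays, sum_congr rfl fun i hi => by rw [hn i hi], add_left_inj] at h

variable (v a ψ σ) in
-- When `⌈ψ u⌉₊ > m` the truncated subtraction makes the fibre over `u` empty.
noncomputable def openConeLatticePoints (m : ℕ) : Finset (Fin d → ℤ) :=
  ((halfOpenBox_finite v a σ).toFinset.sigma fun u =>
    (range (m + 1 - ⌈ψ (castVec u)⌉₊)).biUnion σ.piAntidiag).image
      fun p => addRays v a σ p.1 p.2

theorem mem_openConeLatticePoints (hℓ : ∀ x ∈ coneOf d r v σ, ψ x = ℓ x)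
    (hψb : ∀ i, ψ (rayVec v a i) = 1) {m : ℕ} {w : Fin d → ℤ} :
    w ∈ openConeLatticePoints v a σ ψ m ↔
      castVec w ∈ openCone v a σ ∧ ψ (castVec w) ≤ m := by
  rw [mem_openCone_iff_exists_addRays, ← Nat.ceil_le]
  simp only [openConeLatticePoints, mem_image, mem_sigma, Set.Finite.mem_toFinset, mem_biUnion,
    mem_range, mem_piAntidiag, Sigma.exists]
  constructor
  · rintro ⟨u, n, ⟨hu, j, hj, rfl, hsupp⟩, rfl⟩
    refine ⟨⟨u, hu, n, fun i hi => by_contra fun h => hi (hsupp i h), rfl⟩, ?_⟩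
    rw [ceil_psi_castVec_addRays hℓ hψb hu]
    omega
  · rintro ⟨⟨u, hu, n, hsupp, rfl⟩, hψ⟩
    rw [ceil_psi_castVec_addRays hℓ hψb hu] at hψ
    exact ⟨u, n, ⟨hu, _, by omega, rfl, fun i hi => by_contra fun h => hi (hsupp i h)⟩, rfl⟩

theorem card_openConeLatticePoints (hℓ : ∀ x ∈ coneOf d r v σ, ψ x = ℓ x)
    (hψb : ∀ i, ψ (rayVec v a i) = 1) (hind : LinearIndepOn ℝ (rayVec v a) (σ : Set (Fin r)))
    (m : ℕ) :
    #(openConeLatticePoints v a σ ψ m) =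
      ∑ u ∈ (halfOpenBox_finite v a σ).toFinset, (m + #σ - ⌈ψ (castVec u)⌉₊).choose #σ := by
  rw [openConeLatticePoints, card_image_of_injOn, card_sigma]
  · exact sum_congr rfl fun u hu => card_biUnion_range_piAntidiag σ
      (ceil_psi_le_card_of_mem_halfOpenBox hℓ hψb ((Set.Finite.mem_toFinset _).1 hu)) m
  · rintro ⟨u, n⟩ hun ⟨u', n'⟩ hun' h
    simp only [coe_sigma, Set.mem_sigma_iff, mem_coe, Set.Finite.mem_toFinset, mem_biUnion,
      mem_piAntidiag] at hun hun'
    obtain ⟨rfl, hn⟩ := eq_of_addRays_eq hind hun.1 hun'.1 h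
    obtain ⟨-, -, -, hsupp⟩ := hun.2
    obtain ⟨-, -, -, hsupp'⟩ := hun'.2
    refine Sigma.ext rfl (heq_of_eq (funext fun i => ?_))
    by_cases hi : i ∈ σ
    · exact hn i hi
    · change n i = n' i
      rw [not_imp_comm.1 (hsupp i) hi, not_imp_comm.1 (hsupp' i) hi]

section CompleteFan

variable {cones : Finset (Finset (Fin r))}

theorem ncard_psi_le_eq_sum_choose (ha : ∀ i, 0 < a i)
    (hdown : ∀ σ ∈ cones, ∀ τ ⊆ σ, τ ∈ cones)
    (hindep : ∀ σ ∈ cones, LinearIndepOn ℝ (fun i => castVec (v i)) (σ : Set (Fin r)))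
    (hfan : ∀ σ ∈ cones, ∀ τ ∈ cones,
      coneOf d r v σ ∩ coneOf d r v τ = coneOf d r v (σ ∩ τ))
    (hcomplete : ∀ x : Fin d → ℝ, ∃ σ ∈ cones, x ∈ coneOf d r v σ)
    (hψlin : ∀ σ ∈ cones, ∃ ℓ : (Fin d → ℝ) →ₗ[ℝ] ℝ, ∀ x ∈ coneOf d r v σ, ψ x = ℓ x)
    (hψb : ∀ i, ψ (rayVec v a i) = 1) (m : ℕ) :
    {w : Fin d → ℤ | ψ (castVec w) ≤ m}.ncard =
      ∑ x ∈ cones.sigma fun σ => (halfOpenBox_finite v a σ).toFinset,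
        (m + #x.1 - ⌈ψ (castVec x.2)⌉₊).choose #x.1 := by
  choose! ℓ hℓ using hψlin
  have hmem : ∀ σ ∈ cones, ∀ w, w ∈ openConeLatticePoints v a σ ψ m ↔
      castVec w ∈ openCone v a σ ∧ ψ (castVec w) ≤ m := fun σ hσ _ =>
    mem_openConeLatticePoints (hℓ σ hσ) hψb
  have hset : {w : Fin d → ℤ | ψ (castVec w) ≤ m} =
      ↑(cones.biUnion fun σ => openConeLatticePoints v a σ ψ m) := by
    ext w
    simp only [Set.mem_ofPred_eq, coe_biUnion, mem_coe, Set.mem_iUnion, exists_prop]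
    constructor
    · intro hw
      obtain ⟨σ, hσ, hwσ⟩ := exists_mem_openCone ha hdown hcomplete (castVec w)
      exact ⟨σ, hσ, (hmem σ hσ w).2 ⟨hwσ, hw⟩⟩
    · rintro ⟨σ, hσ, hw⟩
      exact ((hmem σ hσ w).1 hw).2
  rw [hset, Set.ncard_coe_finset, card_biUnion, sum_sigma]
  · exact sum_congr rfl fun σ hσ =>
      card_openConeLatticePoints (hℓ σ hσ) hψb (linearIndepOn_rayVec ha (hindep σ hσ)) m
  · intro σ hσ τ hτ hne
    exact disjoint_left.2 fun w hwσ hwτ => hne <| eq_of_mem_openCone ha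
      (linearIndepOn_rayVec ha (hindep σ hσ)) (linearIndepOn_rayVec ha (hindep τ hτ))
      (hfan σ hσ τ hτ) ((hmem σ hσ w).1 hwσ).1 ((hmem τ hτ w).1 hwτ).1

theorem setOf_psi_castVec_nonpos (ha : ∀ i, 0 < a i)
    (hcomplete : ∀ x : Fin d → ℝ, ∃ σ ∈ cones, x ∈ coneOf d r v σ)
    (hψlin : ∀ σ ∈ cones, ∃ ℓ : (Fin d → ℝ) →ₗ[ℝ] ℝ, ∀ x ∈ coneOf d r v σ, ψ x = ℓ x)
    (hψb : ∀ i, ψ (rayVec v a i) = 1) : {w : Fin d → ℤ | ψ (castVec w) ≤ 0} = {0} := by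
  ext w
  constructor
  · intro hw
    obtain ⟨σ, hσ, hwσ⟩ := hcomplete (castVec w)
    obtain ⟨ℓ, hℓ⟩ := hψlin σ hσ
    obtain ⟨e, he, hwe⟩ := exists_sum_smul_rayVec_of_mem_coneOf ha hwσ
    rw [Set.mem_ofPred_eq, hwe, psi_sum_smul_rayVec hℓ hψb he] at hw
    have he0 := (sum_eq_zero_iff_of_nonneg he).1 (hw.antisymm (sum_nonneg he))
    exact castVec_injective <| by
      rw [hwe, sum_eq_zero fun i hi => by rw [he0 i hi, zero_smul], map_zero]
  · rintro rfl
    obtain ⟨σ, hσ, -⟩ := hcomplete 0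
    obtain ⟨ℓ, hℓ⟩ := hψlin σ hσ
    simpa using (psi_sum_smul_rayVec hℓ hψb (e := 0) fun _ _ => le_rfl).le

theorem exists_card_eq_of_complete (ha : ∀ i, 0 < a i)
    (hindep : ∀ σ ∈ cones, LinearIndepOn ℝ (fun i => castVec (v i)) (σ : Set (Fin r)))
    (hcomplete : ∀ x : Fin d → ℝ, ∃ σ ∈ cones, x ∈ coneOf d r v σ) :
    ∃ σ ∈ cones, #σ = d := by
  obtain ⟨⟨σ, hσ⟩, htop⟩ := Subspace.exists_eq_top_of_iUnion_eq_univ (ι := cones)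
    (p := fun σ => Submodule.span ℝ (σ.1.image (rayVec v a) : Set (Fin d → ℝ))) <|
    Set.eq_univ_of_forall fun x => by
      obtain ⟨σ, hσ, hx⟩ := hcomplete x
      obtain ⟨e, -, rfl⟩ := exists_sum_smul_rayVec_of_mem_coneOf ha hx
      exact Set.mem_iUnion.2 ⟨⟨σ, hσ⟩, Submodule.sum_mem _ fun i hi =>
        Submodule.smul_mem _ _ (Submodule.subset_span (mem_image_of_mem _ hi))⟩
  refine ⟨σ, hσ, (card_le_of_linearIndepOn (hindep σ hσ)).antisymm ?_⟩
  have := finrank_span_finset_le_card (R := ℝ) (σ.image (rayVec v a))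
  rw [Set.finrank, htop, finrank_top, Module.finrank_fin_fun] at this
  exact this.trans card_image_le

end CompleteFan

end Fan

theorem stmt_7_general (d r : ℕ) (v : Fin r → Fin d → ℤ)
    (cones : Finset (Finset (Fin r)))
    (hdown : ∀ σ ∈ cones, ∀ τ ⊆ σ, τ ∈ cones)
    (hindep : ∀ σ ∈ cones, LinearIndependent ℝ (fun i : σ => fun j => (v i j : ℝ)))
    (hfan : ∀ σ ∈ cones, ∀ τ ∈ cones,
      coneOf d r v σ ∩ coneOf d r v τ = coneOf d r v (σ ∩ τ))
    (hcomplete : ∀ x : Fin d → ℝ, ∃ σ ∈ cones, x ∈ coneOf d r v σ)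
    (a : Fin r → ℕ) (ha : ∀ i, 0 < a i)
    (ψ : (Fin d → ℝ) → ℝ)
    (hψlin : ∀ σ ∈ cones, ∃ ℓ : (Fin d → ℝ) →ₗ[ℝ] ℝ, ∀ x ∈ coneOf d r v σ, ψ x = ℓ x)
    (hψb : ∀ i, ψ (fun j => (a i : ℝ) * (v i j : ℝ)) = 1)
    (f : ℕ → ℕ)
    (hf : ∀ m, f m = Set.ncard {w : Fin d → ℤ | ψ (fun j => (w j : ℝ)) ≤ (m : ℝ)}) :
    (∃ p : Polynomial ℚ, p.degree = d ∧ ∀ m : ℕ, 1 ≤ m → (f m : ℚ) = p.eval (m : ℚ)) ∧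
    ∃ δ : Polynomial ℚ, δ.degree ≤ d ∧
      ∀ n : ℕ, (PowerSeries.coeff n)
          ((PowerSeries.mk fun m => if m = 0 then 1 else (f m : ℚ)) *
            (1 - PowerSeries.X) ^ (d + 1)) = δ.coeff n := by
  set J := cones.sigma fun σ => (halfOpenBox_finite v a σ).toFinset
  have hcount : ∀ m, f m = ∑ x ∈ J, (m + #x.1 - ⌈ψ (castVec x.2)⌉₊).choose #x.1 := fun m =>
    (hf m).trans (ncard_psi_le_eq_sum_choose ha hdown hindep hfan hcomplete hψlin hψb m)
  have hks : ∀ x ∈ J, ⌈ψ (castVec x.2)⌉₊ ≤ #x.1 := fun x hx => by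
    obtain ⟨hσ, hu⟩ := mem_sigma.1 hx
    obtain ⟨ℓ, hℓ⟩ := hψlin _ hσ
    exact ceil_psi_le_card_of_mem_halfOpenBox hℓ hψb ((Set.Finite.mem_toFinset _).1 hu)
  have hsd : ∀ x ∈ J, #x.1 ≤ d := fun x hx =>
    card_le_of_linearIndepOn (hindep _ (mem_sigma.1 hx).1)
  have hfull : ∃ x ∈ J, #x.1 = d := by
    obtain ⟨σ, hσ, hcard⟩ := exists_card_eq_of_complete ha hindep hcomplete
    obtain ⟨u, hu⟩ := halfOpenBox_nonempty v a σ
    exact ⟨⟨σ, u⟩, mem_sigma.2 ⟨hσ, (Set.Finite.mem_toFinset _).2 hu⟩, hcard⟩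
  have hf0 : f 0 = 1 := by
    rw [hf, Nat.cast_zero]
    exact (congrArg Set.ncard (setOf_psi_castVec_nonpos ha hcomplete hψlin hψb)).trans
      (Set.ncard_singleton 0)
  obtain ⟨p, hp, hpf⟩ := exists_degree_eq_eval_eq_sum_choose J _ _ hks hsd hfull
  obtain ⟨δ, hδ, hδf⟩ := exists_degree_le_mk_sum_choose_mul_eq J _ _ hks hsd
  refine ⟨⟨p, hp, fun m _ => by rw [hpf, hcount]; push_cast; rfl⟩, δ, hδ, fun n => ?_⟩
  have hmk : (PowerSeries.mk fun m => if m = 0 then 1 else (f m : ℚ)) =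
      PowerSeries.mk fun m => ∑ x ∈ J, ((m + #x.1 - ⌈ψ (castVec x.2)⌉₊).choose #x.1 : ℚ) := by
    ext m
    rw [PowerSeries.coeff_mk, PowerSeries.coeff_mk, ← Nat.cast_sum, ← hcount]
    split_ifs with hm
    · rw [hm, hf0, Nat.cast_one]
    · rfl
  rw [hmk, hδf, Polynomial.coeff_coe]

/-- **Ehrhart.** For `Q = {x ∈ |Σ| : ψ(x) ≤ 1}` with `Σ` a complete simplicial
rational fan and `ψ` piecewise `ℚ`-linear with `ψ(b_i) = 1`, the lattice-point counting
function `f_Q(m) = #(mQ ∩ N)` agrees with a polynomial of degree `d` for `m ≥ 1`, and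
`1 + ∑_{m ≥ 1} f_Q(m) t^m = δ_Q(t)/(1-t)^{d+1}` for a polynomial `δ_Q` of degree `≤ d`. -/
theorem stmt_7 (d r : ℕ) (v : Fin r → Fin d → ℤ)
    (cones : Finset (Finset (Fin r)))
    (hdown : ∀ σ ∈ cones, ∀ τ ⊆ σ, τ ∈ cones)
    (hindep : ∀ σ ∈ cones, LinearIndependent ℝ (fun i : σ => fun j => (v i j : ℝ)))
    (hfan : ∀ σ ∈ cones, ∀ τ ∈ cones,
      coneOf d r v σ ∩ coneOf d r v τ = coneOf d r v (σ ∩ τ))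
    (hcomplete : ∀ x : Fin d → ℝ, ∃ σ ∈ cones, x ∈ coneOf d r v σ)
    (hprim : ∀ i, Finset.univ.gcd (v i) = 1)
    (a : Fin r → ℕ) (ha : ∀ i, 0 < a i)
    (ψ : (Fin d → ℝ) → ℝ)
    (hψlin : ∀ σ ∈ cones, ∃ ℓ : (Fin d → ℝ) →ₗ[ℝ] ℝ, ∀ x ∈ coneOf d r v σ, ψ x = ℓ x)
    (hψb : ∀ i, ψ (fun j => (a i : ℝ) * (v i j : ℝ)) = 1)
    (f : ℕ → ℕ)
    (hf : ∀ m, f m = Set.ncard {w : Fin d → ℤ | ψ (fun j => (w j : ℝ)) ≤ (m : ℝ)}) :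
    (∃ p : Polynomial ℚ, p.degree = d ∧ ∀ m : ℕ, 1 ≤ m → (f m : ℚ) = p.eval (m : ℚ)) ∧
    ∃ δ : Polynomial ℚ, δ.degree ≤ d ∧
      ∀ n : ℕ, (PowerSeries.coeff n)
          ((PowerSeries.mk fun m => if m = 0 then 1 else (f m : ℚ)) *
            (1 - PowerSeries.X) ^ (d + 1)) = δ.coeff n :=
  stmt_7_general d r v cones hdown hindep hfan hcomplete a ha ψ hψlin hψb f hf
end

section
/- If λ is a piecewise linear (not just ℚ-linear) function on |Σ| with λ(b_i) ≥ 0 for all i, then for each integer i, the coefficient of t^i in δ_Q(t; λ) := (1−t)^{d+1}(1 + Σ_{m≥1} Σ_{v ∈ mQ ∩ N} t^{λ(v)+m}) equals the sum of the coefficients of t^j in the weighted δ-vector δ^λ(t) over all rational j with i−1 < j ≤ i. -/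
open scoped Classical

/-- The monomial `t^e` with rational exponent, as a Hahn series. -/
noncomputable def tpow (e : ℚ) : HahnSeries ℚ ℚ := HahnSeries.single e 1

/-- Build a Hahn series from a coefficient function (junk value `0` if not well-founded). -/
noncomputable def mkHahn (c : ℚ → ℚ) : HahnSeries ℚ ℚ :=
  if h : (Function.support c).IsPWO then ⟨c, h⟩ else 0

/-- Coefficients of `1 + ∑_{m ≥ 1} ∑_{v ∈ mQ ∩ N} t^{ψ(v)-⌈ψ(v)⌉+λ(v)+m}` (weighted δ-vector
series). -/
noncomputable def deltaCoeff (d r : ℕ) (v : Fin r → Fin d → ℤ)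
    (cones : Finset (Finset (Fin r))) (ψ lam : (Fin d → ℝ) → ℝ) : ℚ → ℚ := fun e =>
  (if e = 0 then 1 else 0) +
  (Set.ncard {p : ℕ × (Fin d → ℤ) |
    1 ≤ p.1 ∧ (∃ σ ∈ cones, (fun j => (p.2 j : ℝ)) ∈ coneOf d r v σ) ∧
    ψ (fun j => (p.2 j : ℝ)) ≤ (p.1 : ℝ) ∧
    ψ (fun j => (p.2 j : ℝ)) - ⌈ψ (fun j => (p.2 j : ℝ))⌉
      + lam (fun j => (p.2 j : ℝ)) + (p.1 : ℝ) = (e : ℝ)} : ℚ)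

/-- Coefficients of `1 + ∑_{m ≥ 1} ∑_{v ∈ mQ ∩ N} t^{λ(v)+m}` (the series defining
`δ_Q(t; λ)`). -/
noncomputable def deltaQCoeff (d r : ℕ) (v : Fin r → Fin d → ℤ)
    (cones : Finset (Finset (Fin r))) (ψ lam : (Fin d → ℝ) → ℝ) : ℚ → ℚ := fun e =>
  (if e = 0 then 1 else 0) +
  (Set.ncard {p : ℕ × (Fin d → ℤ) |
    1 ≤ p.1 ∧ (∃ σ ∈ cones, (fun j => (p.2 j : ℝ)) ∈ coneOf d r v σ) ∧
    ψ (fun j => (p.2 j : ℝ)) ≤ (p.1 : ℝ) ∧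
    lam (fun j => (p.2 j : ℝ)) + (p.1 : ℝ) = (e : ℝ)} : ℚ)

/-!
A pair `(m, w)` with `w ∈ mQ ∩ N` contributes `t^(λ(w) + m)` to the series of `δ_Q` and `t^e` to
that of `δ^λ`, where `e = ψ(w) - ⌈ψ(w)⌉ + λ(w) + m`. Since `λ(w)` is an integer, `⌈e⌉ = λ(w) + m`:
the series of `δ_Q` is the series of `δ^λ` with every exponent rounded up. Rounding exponents up
commutes with multiplication by `t`, hence with multiplication by `(1 - t)^(d+1)`. The coefficient
sums involved are finite because `λ ≥ 0` on `|Σ|` and `ψ` bounds the lattice points of `mQ`.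
-/

open Set Function

lemma mkHahn_coeff {c : ℚ → ℚ} (h : (support c).IsPWO) : (mkHahn c).coeff = c := by
  simp [mkHahn, h]

lemma isPWO_of_finite_inter_Iic {s : Set ℚ} (h : ∀ M : ℚ, (s ∩ Iic M).Finite) : s.IsPWO := by
  refine Set.IsWF.isPWO (Set.isWF_iff_no_descending_seq.mpr fun f hf hmem => ?_)
  have hsub : range f ⊆ s ∩ Iic (f 0) := by
    rintro x ⟨n, rfl⟩
    exact ⟨hmem n, hf.antitone n.zero_le⟩
  exact infinite_range_of_injective hf.injective ((h (f 0)).subset hsub)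

lemma coeff_tpow_mul (X : HahnSeries ℚ ℚ) (a e : ℚ) : (tpow a * X).coeff e = X.coeff (e - a) := by
  simpa [tpow] using HahnSeries.coeff_single_mul_add (r := (1 : ℚ)) (x := X) (a := e - a) (b := a)

lemma coeff_one_sub_tpow_mul (X : HahnSeries ℚ ℚ) (e : ℚ) :
    ((1 - tpow 1) * X).coeff e = X.coeff e - X.coeff (e - 1) := by
  rw [sub_mul, one_mul, HahnSeries.coeff_sub, coeff_tpow_mul]

lemma support_one_sub_tpow_mul_inter_Iic_subset (Y : HahnSeries ℚ ℚ) (M : ℚ) :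
    ((1 - tpow 1) * Y).support ∩ Iic M ⊆
      (Y.support ∩ Iic M) ∪ (· + 1) '' (Y.support ∩ Iic M) := by
  rintro x ⟨hx, hxM⟩
  rw [HahnSeries.mem_support, coeff_one_sub_tpow_mul] at hx
  by_cases hY : Y.coeff x = 0
  · refine Or.inr ⟨x - 1, ⟨?_, ?_⟩, sub_add_cancel x 1⟩
    · simpa [hY] using hx
    · simp only [mem_Iic] at hxM ⊢; linarith
  · exact Or.inl ⟨hY, hxM⟩

/-- `X` is `Y` with every exponent rounded up to the next integer: the coefficient of `X` at an
integer `n` collects the coefficients of `Y` at the exponents in `(n - 1, n]`. -/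
structure IsCeilSum (X Y : HahnSeries ℚ ℚ) : Prop where
  finite_support_inter_Iic : ∀ M : ℚ, (Y.support ∩ Iic M).Finite
  coeff_intCast : ∀ n : ℤ, X.coeff n = ∑ᶠ j ∈ Ioc ((n : ℚ) - 1) n, Y.coeff j

namespace IsCeilSum

variable {X Y : HahnSeries ℚ ℚ}

lemma one_sub_tpow_mul (h : IsCeilSum X Y) : IsCeilSum ((1 - tpow 1) * X) ((1 - tpow 1) * Y) := by
  have hfin : ∀ M, (((1 - tpow 1) * Y).support ∩ Iic M).Finite := fun M =>
    ((h.finite_support_inter_Iic M).union ((h.finite_support_inter_Iic M).image _)).subset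
      (support_one_sub_tpow_mul_inter_Iic_subset Y M)
  refine ⟨hfin, fun n => ?_⟩
  set s := Ioc ((n : ℚ) - 1) n
  have hs : s ⊆ Iic (n : ℚ) := Ioc_subset_Iic_self
  -- `Y j = ((1 - t) Y) j + Y (j - 1)`, and the shifted sum is the coefficient of `X` at `n - 1`.
  have hshift : ∑ᶠ j ∈ s, Y.coeff (j - 1) = X.coeff ((n - 1 : ℤ) : ℚ) := by
    rw [h.coeff_intCast, ← finsum_mem_image (sub_left_injective.injOn), image_sub_const_Ioc]
    push_cast
    rfl
  have hsplit := finsum_mem_add_distrib' (s := s) (f := fun j => ((1 - tpow 1) * Y).coeff j)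
    (g := fun j => Y.coeff (j - 1))
    ((hfin n).subset (by rw [inter_comm]; exact inter_subset_inter_right _ hs))
    (((h.finite_support_inter_Iic n).preimage sub_left_injective.injOn).subset
      fun j ⟨hj, hY⟩ => ⟨hY, by have := hs hj; simp only [mem_Iic] at this ⊢; linarith⟩)
  have hY : ∀ j, ((1 - tpow 1) * Y).coeff j + Y.coeff (j - 1) = Y.coeff j := fun j => by
    rw [coeff_one_sub_tpow_mul, sub_add_cancel]
  simp only [hY] at hsplit
  rw [coeff_one_sub_tpow_mul, h.coeff_intCast, hsplit, hshift]
  push_cast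
  ring

lemma one_sub_tpow_pow_mul (h : IsCeilSum X Y) (N : ℕ) :
    IsCeilSum ((1 - tpow 1) ^ N * X) ((1 - tpow 1) ^ N * Y) := by
  induction N with
  | zero => simpa using h
  | succ N ih => simpa only [pow_succ', mul_assoc] using ih.one_sub_tpow_mul

end IsCeilSum

lemma finsum_mem_ite_eq {β M : Type*} [DecidableEq β] [AddCommMonoid M] (s : Set β) (a : β)
    (b : M) :
    ∑ᶠ x ∈ s, (if x = a then b else 0) = if a ∈ s then b else 0 := by
  rw [finsum_mem_def, finsum_eq_single _ a fun x hx => by simp [hx]]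
  by_cases ha : a ∈ s <;> simp [ha]

lemma zero_mem_Ioc_intCast_iff (n : ℤ) : (0 : ℚ) ∈ Ioc ((n : ℚ) - 1) n ↔ (n : ℚ) = 0 := by
  simp only [mem_Ioc, sub_neg]; norm_cast; omega

section CountCoeff

variable {α : Type*} (P : Set α) (e : α → ℚ)

/-- The coefficient function of `1 + ∑_{p ∈ P} t ^ (e p)`. -/
noncomputable def countCoeff (x : ℚ) : ℚ :=
  (if x = 0 then 1 else 0) + ({p ∈ P | e p = x}.ncard : ℚ)

variable {P e}

lemma finite_support_countCoeff_inter_Iic {M : ℚ} (hfin : {p ∈ P | e p ≤ M}.Finite) :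
    (support (countCoeff P e) ∩ Iic M).Finite := by
  refine ((hfin.image e).insert 0).subset fun x ⟨hx, hxM⟩ => ?_
  by_cases hx0 : x = 0
  · exact Or.inl hx0
  · have hne : {p ∈ P | e p = x}.ncard ≠ 0 := fun h0 => hx (by simp [countCoeff, hx0, h0])
    obtain ⟨p, hpP, rfl⟩ := nonempty_of_ncard_ne_zero hne
    exact Or.inr ⟨p, ⟨hpP, hxM⟩, rfl⟩

lemma finsum_Ioc_ncard_fiber (n : ℤ) (hfin : {p ∈ P | ⌈e p⌉ = n}.Finite) :
    ∑ᶠ x ∈ Ioc ((n : ℚ) - 1) n, ({p ∈ P | e p = x}.ncard : ℚ) =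
      {p ∈ P | ⌈e p⌉ = n}.ncard := by
  set S := hfin.toFinset
  have hfiber : ∀ x : ℚ, ⌈x⌉ = n → {p ∈ P | e p = x} = ↑{p ∈ S | e p = x} := fun x hx => by
    ext p
    simp only [mem_ofPred_eq, Finset.coe_filter, S, Finite.mem_toFinset]
    constructor
    · rintro ⟨hp, rfl⟩; exact ⟨⟨hp, hx⟩, rfl⟩
    · rintro ⟨⟨hp, -⟩, rfl⟩; exact ⟨hp, rfl⟩
  rw [finsum_mem_eq_sum_of_inter_support_eq _ (t := S.image e)]
  · rw [ncard_eq_toFinset_card _ hfin, Finset.card_eq_sum_card_image e S]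
    push_cast
    refine Finset.sum_congr rfl fun x hx => ?_
    obtain ⟨p, hp, rfl⟩ := Finset.mem_image.mp hx
    rw [hfiber _ ((Finite.mem_toFinset hfin).mp hp).2, ncard_coe_finset]
  · ext x
    simp only [mem_inter_iff, mem_support, Finset.coe_image, mem_image, Finset.mem_coe,
      S, Finite.mem_toFinset, mem_ofPred_eq, Nat.cast_ne_zero]
    constructor
    · rintro ⟨hx, hne⟩
      obtain ⟨p, hp, rfl⟩ := nonempty_of_ncard_ne_zero hne
      exact ⟨⟨p, ⟨hp, Int.ceil_eq_iff.mpr hx⟩, rfl⟩, hne⟩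
    · rintro ⟨⟨p, ⟨-, hpn⟩, rfl⟩, hne⟩
      exact ⟨Int.ceil_eq_iff.mp hpn, hne⟩

lemma finsum_Ioc_countCoeff (n : ℤ) (hfin : {p ∈ P | ⌈e p⌉ = n}.Finite) :
    ∑ᶠ x ∈ Ioc ((n : ℚ) - 1) n, countCoeff P e x = countCoeff P (fun p => (⌈e p⌉ : ℚ)) n := by
  have hfin' : (Ioc ((n : ℚ) - 1) n ∩ support fun x => ({p ∈ P | e p = x}.ncard : ℚ)).Finite := by
    refine ((hfin.image e).subset fun x ⟨hx, hne⟩ => ?_)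
    obtain ⟨p, hp, rfl⟩ := nonempty_of_ncard_ne_zero (Nat.cast_ne_zero.mp hne)
    exact ⟨p, ⟨hp, Int.ceil_eq_iff.mpr hx⟩, rfl⟩
  have hfin₀ : (Ioc ((n : ℚ) - 1) n ∩ support fun x => if x = 0 then (1 : ℚ) else 0).Finite :=
    (finite_singleton 0).subset fun x ⟨_, hx⟩ => by_contra fun h => hx (if_neg h)
  simp only [countCoeff, Int.cast_inj]
  rw [finsum_mem_add_distrib' hfin₀ hfin', finsum_mem_ite_eq, finsum_Ioc_ncard_fiber n hfin]
  simp only [zero_mem_Ioc_intCast_iff]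

lemma isCeilSum_mkHahn_countCoeff (hfin : ∀ M : ℚ, {p ∈ P | e p ≤ M}.Finite) :
    IsCeilSum (mkHahn (countCoeff P fun p => (⌈e p⌉ : ℚ))) (mkHahn (countCoeff P e)) := by
  have hceil : ∀ M : ℚ, {p ∈ P | (⌈e p⌉ : ℚ) ≤ M}.Finite := fun M =>
    (hfin M).subset fun p ⟨hp, hpM⟩ => ⟨hp, (Int.le_ceil _).trans hpM⟩
  have hsupp := fun M => finite_support_countCoeff_inter_Iic (hfin M)
  refine ⟨?_, fun n => ?_⟩ <;> simp only [HahnSeries.support, mkHahn_coeff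
    (isPWO_of_finite_inter_Iic hsupp), mkHahn_coeff
    (isPWO_of_finite_inter_Iic fun M => finite_support_countCoeff_inter_Iic (hceil M))]
  · exact hsupp
  · exact (finsum_Ioc_countCoeff n <| (hfin n).subset fun p ⟨hp, hpn⟩ =>
      ⟨hp, Int.ceil_le.mp hpn.le⟩).symm

end CountCoeff

section Fan

variable {d r : ℕ} {v : Fin r → Fin d → ℤ} {σ : Finset (Fin r)}

lemma LinearMap.apply_eq_sum_of_coeffs (ℓ : (Fin d → ℝ) →ₗ[ℝ] ℝ) {x : Fin d → ℝ} {c : Fin r → ℝ}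
    (hx : ∀ j, x j = ∑ i, c i * (v i j : ℝ)) : ℓ x = ∑ i, c i * ℓ (fun j => (v i j : ℝ)) := by
  have : x = ∑ i, c i • fun j => (v i j : ℝ) := funext fun j => by simp [hx j]
  simp [this, map_sum]

lemma mul_mem_coneOf {t : ℝ} (ht : 0 ≤ t) {i : Fin r} (hi : i ∈ σ) :
    (fun j => t * (v i j : ℝ)) ∈ coneOf d r v σ := by
  refine ⟨Pi.single i t, fun k => ?_,
    fun k hk => Pi.single_eq_of_ne (ne_of_mem_of_not_mem hi hk).symm _,
    fun j => by simp [Pi.single_apply]⟩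
  by_cases h : k = i <;> simp [h, ht]

lemma apply_mul_eq_of_eqOn_coneOf {f : (Fin d → ℝ) → ℝ} {ℓ : (Fin d → ℝ) →ₗ[ℝ] ℝ}
    (hℓ : ∀ x ∈ coneOf d r v σ, f x = ℓ x) {t : ℝ} (ht : 0 ≤ t) {i : Fin r} (hi : i ∈ σ) :
    f (fun j => t * (v i j : ℝ)) = t * ℓ (fun j => (v i j : ℝ)) := by
  rw [hℓ _ (mul_mem_coneOf ht hi), ← smul_eq_mul, ← map_smul]
  rfl

variable {a : Fin r → ℕ} {f : (Fin d → ℝ) → ℝ} {ℓ : (Fin d → ℝ) →ₗ[ℝ] ℝ}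

lemma pos_of_apply_mul_eq_one (hℓ : ∀ x ∈ coneOf d r v σ, f x = ℓ x)
    (hf : ∀ i, f (fun j => (a i : ℝ) * (v i j : ℝ)) = 1) {i : Fin r} (hi : i ∈ σ) : 0 < a i := by
  have hgen := (apply_mul_eq_of_eqOn_coneOf hℓ (Nat.cast_nonneg _) hi).symm.trans (hf i)
  exact Nat.pos_of_ne_zero fun h0 => by simp [h0] at hgen

lemma nonneg_of_mem_coneOf (hℓ : ∀ x ∈ coneOf d r v σ, f x = ℓ x) (ha : ∀ i ∈ σ, 0 < a i)
    (hf : ∀ i, 0 ≤ f (fun j => (a i : ℝ) * (v i j : ℝ))) {x : Fin d → ℝ}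
    (hx : x ∈ coneOf d r v σ) : 0 ≤ f x := by
  obtain ⟨c, hc0, hcσ, hcx⟩ := hx
  rw [hℓ x ⟨c, hc0, hcσ, hcx⟩, ℓ.apply_eq_sum_of_coeffs hcx]
  refine Finset.sum_nonneg fun i _ => ?_
  by_cases hi : i ∈ σ
  · have hfi := hf i
    rw [apply_mul_eq_of_eqOn_coneOf hℓ (Nat.cast_nonneg _) hi] at hfi
    exact mul_nonneg (hc0 i) (nonneg_of_mul_nonneg_right hfi (by exact_mod_cast ha i hi))
  · simp [hcσ i hi]

lemma abs_apply_le_of_mem_coneOf (hℓ : ∀ x ∈ coneOf d r v σ, f x = ℓ x)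
    (hf : ∀ i, f (fun j => (a i : ℝ) * (v i j : ℝ)) = 1) {x : Fin d → ℝ}
    (hx : x ∈ coneOf d r v σ) (j : Fin d) : |x j| ≤ f x * ∑ i, (a i : ℝ) * |(v i j : ℝ)| := by
  obtain ⟨c, hc0, hcσ, hcx⟩ := hx
  have hfx : f x = ∑ i, c i * ℓ (fun j => (v i j : ℝ)) :=
    (hℓ x ⟨c, hc0, hcσ, hcx⟩).trans (ℓ.apply_eq_sum_of_coeffs hcx)
  have hgen : ∀ i ∈ σ, (a i : ℝ) * ℓ (fun j => (v i j : ℝ)) = 1 := fun i hi =>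
    (apply_mul_eq_of_eqOn_coneOf hℓ (Nat.cast_nonneg _) hi).symm.trans (hf i)
  -- every coefficient `c i` equals `a i` times the `i`-th summand of `f x`
  have hc : ∀ i, c i = a i * (c i * ℓ (fun j => (v i j : ℝ))) := fun i => by
    by_cases hi : i ∈ σ
    · rw [mul_left_comm, hgen i hi, mul_one]
    · simp [hcσ i hi]
  have hterm : ∀ i, 0 ≤ c i * ℓ (fun j => (v i j : ℝ)) := fun i => by
    by_cases hi : i ∈ σ
    · exact mul_nonneg (hc0 i) (pos_of_mul_pos_right ((hgen i hi).symm ▸ one_pos)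
        (Nat.cast_nonneg _)).le
    · simp [hcσ i hi]
  have hcle : ∀ i, c i ≤ a i * f x := fun i => by
    rw [hc i, hfx]
    exact mul_le_mul_of_nonneg_left
      (Finset.single_le_sum (fun k _ => hterm k) (Finset.mem_univ i)) (Nat.cast_nonneg _)
  calc |x j| = |∑ i, c i * (v i j : ℝ)| := by rw [hcx j]
    _ ≤ ∑ i, c i * |(v i j : ℝ)| := by
        refine (Finset.abs_sum_le_sum_abs _ _).trans_eq (Finset.sum_congr rfl fun i _ => ?_)
        rw [abs_mul, abs_of_nonneg (hc0 i)]
    _ ≤ ∑ i, a i * f x * |(v i j : ℝ)| :=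
        Finset.sum_le_sum fun i _ => mul_le_mul_of_nonneg_right (hcle i) (abs_nonneg _)
    _ = f x * ∑ i, (a i : ℝ) * |(v i j : ℝ)| := by
        rw [Finset.mul_sum]; exact Finset.sum_congr rfl fun i _ => by ring

end Fan

section DilatedLatticePoints

variable (d r : ℕ) (v : Fin r → Fin d → ℤ) (cones : Finset (Finset (Fin r)))
  (ψ : (Fin d → ℝ) → ℝ)

/-- The pairs `(m, w)` with `m ≥ 1` and `w ∈ mQ ∩ N`, where `Q = ψ⁻¹([0, 1])`. -/
def dilatedLatticePoints : Set (ℕ × (Fin d → ℤ)) :=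
  {p | 1 ≤ p.1 ∧ (∃ σ ∈ cones, (fun j => (p.2 j : ℝ)) ∈ coneOf d r v σ) ∧
    ψ (fun j => (p.2 j : ℝ)) ≤ p.1}

variable {d r v cones ψ}

lemma finite_dilatedLatticePoints_fst_le {a : Fin r → ℕ}
    (hψlin : ∀ σ ∈ cones, ∃ ℓ : (Fin d → ℝ) →ₗ[ℝ] ℝ, ∀ x ∈ coneOf d r v σ, ψ x = ℓ x)
    (hψb : ∀ i, ψ (fun j => (a i : ℝ) * (v i j : ℝ)) = 1) (M : ℝ) :
    {p ∈ dilatedLatticePoints d r v cones ψ | (p.1 : ℝ) ≤ M}.Finite := by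
  set B : Fin d → ℝ := fun j => M * ∑ i, (a i : ℝ) * |(v i j : ℝ)|
  refine ((finite_Iic ⌈M⌉₊).prod (Finite.pi fun j => finite_Icc (-⌈B j⌉) ⌈B j⌉)).subset ?_
  rintro ⟨m, w⟩ ⟨⟨-, ⟨σ, hσ, hw⟩, hψw⟩, hmM⟩
  refine ⟨Nat.cast_le.mp (hmM.trans (Nat.le_ceil M)), fun j _ => ?_⟩
  obtain ⟨ℓ, hℓ⟩ := hψlin σ hσ
  have hwj : |(w j : ℝ)| ≤ ⌈B j⌉ := (abs_apply_le_of_mem_coneOf hℓ hψb hw j).trans <|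
    (mul_le_mul_of_nonneg_right (hψw.trans hmM) (by positivity)).trans (Int.le_ceil _)
  exact abs_le.mp (by exact_mod_cast hwj)

end DilatedLatticePoints

section WeightedExponent

variable {d r : ℕ} {v : Fin r → Fin d → ℤ} {cones : Finset (Finset (Fin r))}
  {ψ lam : (Fin d → ℝ) → ℝ} {ψq : (Fin d → ℤ) → ℚ} {lamz : (Fin d → ℤ) → ℤ}

variable (ψq lamz) in
/-- The exponent of `t` contributed by `(m, w)` to `δ^λ`, where `ψq` and `lamz` are the values of
`ψ` and `λ` on lattice points. -/
def weightedExponent (p : ℕ × (Fin d → ℤ)) : ℚ := ψq p.2 - ⌈ψq p.2⌉ + lamz p.2 + p.1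

lemma ceil_weightedExponent (p : ℕ × (Fin d → ℤ)) :
    ⌈weightedExponent ψq lamz p⌉ = lamz p.2 + p.1 := by
  have : weightedExponent ψq lamz p = ψq p.2 + ((-⌈ψq p.2⌉ + lamz p.2 + p.1 : ℤ) : ℚ) := by
    simp only [weightedExponent]; push_cast; ring
  rw [this, Int.ceil_add_intCast]
  ring

lemma deltaCoeff_eq_countCoeff (hψq : ∀ w, ψ (fun j => (w j : ℝ)) = ψq w)
    (hlamz : ∀ w, lam (fun j => (w j : ℝ)) = lamz w) :
    deltaCoeff d r v cones ψ lam =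
      countCoeff (dilatedLatticePoints d r v cones ψ) (weightedExponent ψq lamz) := by
  ext x
  simp only [deltaCoeff, countCoeff, dilatedLatticePoints, weightedExponent, hψq, hlamz,
    mem_ofPred_eq, and_assoc]
  norm_cast

lemma deltaQCoeff_eq_countCoeff (hlamz : ∀ w, lam (fun j => (w j : ℝ)) = lamz w) :
    deltaQCoeff d r v cones ψ lam =
      countCoeff (dilatedLatticePoints d r v cones ψ) (fun p => ((lamz p.2 + p.1 : ℤ) : ℚ)) := by
  ext x
  simp only [deltaQCoeff, countCoeff, dilatedLatticePoints, hlamz, mem_ofPred_eq, and_assoc]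
  push_cast
  norm_cast

lemma finite_weightedExponent_le {a : Fin r → ℕ}
    (hψlin : ∀ σ ∈ cones, ∃ ℓ : (Fin d → ℝ) →ₗ[ℝ] ℝ, ∀ x ∈ coneOf d r v σ, ψ x = ℓ x)
    (hψb : ∀ i, ψ (fun j => (a i : ℝ) * (v i j : ℝ)) = 1)
    (hlamlin : ∀ σ ∈ cones, ∃ ℓ : (Fin d → ℝ) →ₗ[ℝ] ℝ, ∀ x ∈ coneOf d r v σ, lam x = ℓ x)
    (hlamb : ∀ i, 0 ≤ lam (fun j => (a i : ℝ) * (v i j : ℝ)))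
    (hlamz : ∀ w, lam (fun j => (w j : ℝ)) = lamz w) (M : ℚ) :
    {p ∈ dilatedLatticePoints d r v cones ψ | weightedExponent ψq lamz p ≤ M}.Finite := by
  refine (finite_dilatedLatticePoints_fst_le hψlin hψb (M + 1)).subset fun p ⟨hp, hpM⟩ => ⟨hp, ?_⟩
  obtain ⟨-, ⟨σ, hσ, hw⟩, -⟩ := hp
  obtain ⟨ℓψ, hℓψ⟩ := hψlin σ hσ
  obtain ⟨ℓ, hℓ⟩ := hlamlin σ hσ
  have hlam : (0 : ℝ) ≤ lamz p.2 := hlamz p.2 ▸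
    nonneg_of_mem_coneOf hℓ (fun i hi => pos_of_apply_mul_eq_one hℓψ hψb hi) hlamb hw
  have hceil := Int.ceil_lt_add_one (weightedExponent ψq lamz p)
  rw [ceil_weightedExponent] at hceil
  have : ((lamz p.2 + p.1 : ℤ) : ℝ) < M + 1 := by exact_mod_cast hceil.trans_le (by linarith)
  push_cast at this
  linarith

end WeightedExponent

theorem stmt_9_general (d r : ℕ) (v : Fin r → Fin d → ℤ)
    (cones : Finset (Finset (Fin r)))
    (a : Fin r → ℕ)
    (ψ lam : (Fin d → ℝ) → ℝ)
    (hψlin : ∀ σ ∈ cones, ∃ ℓ : (Fin d → ℝ) →ₗ[ℝ] ℝ, ∀ x ∈ coneOf d r v σ, ψ x = ℓ x)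
    (hψb : ∀ i, ψ (fun j => (a i : ℝ) * (v i j : ℝ)) = 1)
    -- `ψ` takes rational values on lattice points
    (hψrat : ∀ w : Fin d → ℤ, ∃ c : ℚ, ψ (fun j => (w j : ℝ)) = (c : ℝ))
    (hlamlin : ∀ σ ∈ cones, ∃ ℓ : (Fin d → ℝ) →ₗ[ℝ] ℝ, ∀ x ∈ coneOf d r v σ, lam x = ℓ x)
    -- `λ` is piecewise *linear*: it takes integer values on lattice points
    (hlamint : ∀ w : Fin d → ℤ, ∃ z : ℤ, lam (fun j => (w j : ℝ)) = (z : ℝ))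
    (hlamb : ∀ i, 0 ≤ lam (fun j => (a i : ℝ) * (v i j : ℝ))) :
    ∀ i : ℤ,
      ((1 - tpow 1) ^ (d + 1) * mkHahn (deltaQCoeff d r v cones ψ lam)).coeff (i : ℚ)
        = ∑ᶠ j ∈ Set.Ioc ((i : ℚ) - 1) (i : ℚ),
            ((1 - tpow 1) ^ (d + 1) * mkHahn (deltaCoeff d r v cones ψ lam)).coeff j := by
  choose ψq hψq using hψrat
  choose lamz hlamz using hlamint
  have hceil :
      (fun p => (⌈weightedExponent ψq lamz p⌉ : ℚ)) = fun p => ((lamz p.2 + p.1 : ℤ) : ℚ) :=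
    funext fun p => congrArg _ (ceil_weightedExponent p)
  rw [deltaCoeff_eq_countCoeff hψq hlamz, deltaQCoeff_eq_countCoeff hlamz, ← hceil]
  have hround := isCeilSum_mkHahn_countCoeff
    (finite_weightedExponent_le (ψq := ψq) hψlin hψb hlamlin hlamb hlamz)
  exact (hround.one_sub_tpow_pow_mul (d + 1)).coeff_intCast

/-- If `λ` is piecewise linear (integral on lattice points) with
`λ(b_i) ≥ 0`, then for each integer `i` the coefficient of `t^i` in
`δ_Q(t; λ) = (1-t)^{d+1}(1 + ∑_{m≥1} ∑_{v ∈ mQ∩N} t^{λ(v)+m})` equals the sum of the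
coefficients of `t^j` in the weighted δ-vector `δ^λ(t)` over all rational `j` with
`i - 1 < j ≤ i`. -/
theorem stmt_9 (d r : ℕ) (v : Fin r → Fin d → ℤ)
    (cones : Finset (Finset (Fin r)))
    (hdown : ∀ σ ∈ cones, ∀ τ ⊆ σ, τ ∈ cones)
    (hindep : ∀ σ ∈ cones, LinearIndependent ℝ (fun i : σ => fun j => (v i j : ℝ)))
    (hfan : ∀ σ ∈ cones, ∀ τ ∈ cones,
      coneOf d r v σ ∩ coneOf d r v τ = coneOf d r v (σ ∩ τ))
    (hconvex : Convex ℝ (⋃ σ ∈ cones, coneOf d r v σ))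
    (a : Fin r → ℕ) (ha : ∀ i, 0 < a i)
    (ψ lam : (Fin d → ℝ) → ℝ)
    (hψlin : ∀ σ ∈ cones, ∃ ℓ : (Fin d → ℝ) →ₗ[ℝ] ℝ, ∀ x ∈ coneOf d r v σ, ψ x = ℓ x)
    (hψb : ∀ i, ψ (fun j => (a i : ℝ) * (v i j : ℝ)) = 1)
    -- `ψ` takes rational values on lattice points
    (hψrat : ∀ w : Fin d → ℤ, ∃ c : ℚ, ψ (fun j => (w j : ℝ)) = (c : ℝ))
    (hlamlin : ∀ σ ∈ cones, ∃ ℓ : (Fin d → ℝ) →ₗ[ℝ] ℝ, ∀ x ∈ coneOf d r v σ, lam x = ℓ x)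
    -- `λ` is piecewise *linear*: it takes integer values on lattice points
    (hlamint : ∀ w : Fin d → ℤ, ∃ z : ℤ, lam (fun j => (w j : ℝ)) = (z : ℝ))
    (hlamb : ∀ i, 0 ≤ lam (fun j => (a i : ℝ) * (v i j : ℝ))) :
    ∀ i : ℤ,
      ((1 - tpow 1) ^ (d + 1) * mkHahn (deltaQCoeff d r v cones ψ lam)).coeff (i : ℚ)
        = ∑ᶠ j ∈ Set.Ioc ((i : ℚ) - 1) (i : ℚ),
            ((1 - tpow 1) ^ (d + 1) * mkHahn (deltaCoeff d r v cones ψ lam)).coeff j :=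
  stmt_9_general d r v cones a ψ lam hψlin hψb hψrat hlamlin hlamint hlamb
end

section
/- For the modified h-vector h_τ^λ one has the identity t^{codim τ} h_τ^λ(t^{-1}) = (t−1)^{codim τ} Σ_{σ ⊇ τ} ∏_{ρ_i ⊆ σ∖τ} 1/(t^{λ(b_i)+1} − 1), where the sum is over cones σ of Σ containing τ. -/
/-- The modified `h`-vector `h_τ^λ`, evaluated with a general monomial assignment `s`
(so that `s = tpow` gives `h_τ^λ(t)`, and `s = fun e => tpow (-e)` gives `h_τ^λ(t⁻¹)`):
`h_τ^λ(t) = ∑_{σ ⊇ τ} t^{∑_{ρ_i ⊆ σ∖τ} λ(b_i)} t^{dim σ - dim τ} (1-t)^{codim σ}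
∏_{ρ_i ⊆ σ∖τ} (1-t)/(1-t^{λ(b_i)+1})`. -/
noncomputable def hTauGen (d r : ℕ) (cones : Finset (Finset (Fin r))) (lb : Fin r → ℚ)
    (s : ℚ → HahnSeries ℚ ℚ) (τ : Finset (Fin r)) : HahnSeries ℚ ℚ :=
  ∑ σ ∈ cones, if τ ⊆ σ then
    s (∑ i ∈ σ \ τ, lb i) * s ((σ.card : ℚ) - (τ.card : ℚ)) *
      (1 - s 1) ^ (d - σ.card) *
      ∏ i ∈ σ \ τ, (1 - s 1) / (1 - s (lb i + 1))
  else 0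

/-! Term by term, `t^{codim τ} h_τ^λ(t⁻¹)` is turned into the right-hand side by
`1 - t^{-b} = t^{-b} (t^b - 1)`: every factor then becomes a power of `t - 1` or of
`(t^{λ(b_i)+1} - 1)⁻¹` times a monomial, and the monomials multiply to
`t^{(d - |τ|) - ∑ λ(b_i) - (|σ| - |τ|) - (d - |σ|) + ∑ λ(b_i)} = 1`. -/

@[simp]
lemma tpow_zero : tpow 0 = 1 := rfl

lemma tpow_add (a b : ℚ) : tpow (a + b) = tpow a * tpow b := by
  simp [tpow, HahnSeries.single_mul_single]

lemma tpow_pow (a : ℚ) (n : ℕ) : tpow a ^ n = tpow (n * a) := by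
  simp [tpow, HahnSeries.single_pow]

lemma tpow_sum {α : Type*} (s : Finset α) (f : α → ℚ) :
    tpow (∑ i ∈ s, f i) = ∏ i ∈ s, tpow (f i) := by
  classical
  induction s using Finset.induction_on with
  | empty => simp
  | insert a s ha ih => rw [Finset.sum_insert ha, Finset.prod_insert ha, tpow_add, ih]

lemma tpow_mul_tpow_neg (a : ℚ) : tpow a * tpow (-a) = 1 := by
  rw [← tpow_add, add_neg_cancel, tpow_zero]

lemma one_sub_tpow_neg (b : ℚ) : 1 - tpow (-b) = tpow (-b) * (tpow b - 1) := by
  rw [mul_sub, mul_one, mul_comm, tpow_mul_tpow_neg]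

lemma one_sub_tpow_neg_pow (b : ℚ) (n : ℕ) :
    (1 - tpow (-b)) ^ n = tpow (-(n * b)) * (tpow b - 1) ^ n := by
  rw [one_sub_tpow_neg, mul_pow, tpow_pow, mul_neg]

lemma one_sub_tpow_neg_div (b c : ℚ) :
    (1 - tpow (-c)) / (1 - tpow (-b)) = tpow (b - c) * ((tpow c - 1) / (tpow b - 1)) := by
  have hb : (tpow (-b))⁻¹ = tpow b := inv_eq_of_mul_eq_one_left (tpow_mul_tpow_neg b)
  rw [one_sub_tpow_neg, one_sub_tpow_neg, mul_div_mul_comm, div_eq_mul_inv _ (tpow (-b)), hb,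
    sub_eq_neg_add b c, tpow_add]

lemma prod_one_sub_tpow_neg_div {α : Type*} (s : Finset α) (lb : α → ℚ) :
    ∏ i ∈ s, (1 - tpow (-1)) / (1 - tpow (-(lb i + 1)))
      = tpow (∑ i ∈ s, lb i) * ((tpow 1 - 1) ^ s.card * ∏ i ∈ s, 1 / (tpow (lb i + 1) - 1)) := by
  simp only [one_sub_tpow_neg_div, add_sub_cancel_right, div_eq_mul_one_div (tpow 1 - 1),
    Finset.prod_mul_distrib, Finset.prod_const, tpow_sum]

lemma tpow_codim_mul_hTauGen_term (d : ℕ) {r : ℕ} (lb : Fin r → ℚ) {τ σ : Finset (Fin r)}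
    (hτσ : τ ⊆ σ) (hσ : σ.card ≤ d) :
    tpow ((d : ℚ) - (τ.card : ℚ)) *
      (tpow (-(∑ i ∈ σ \ τ, lb i)) * tpow (-((σ.card : ℚ) - (τ.card : ℚ))) *
        (1 - tpow (-1)) ^ (d - σ.card) *
        ∏ i ∈ σ \ τ, (1 - tpow (-1)) / (1 - tpow (-(lb i + 1))))
    = (tpow 1 - 1) ^ (d - τ.card) * ∏ i ∈ σ \ τ, 1 / (tpow (lb i + 1) - 1) := by
  have hmono : tpow ((d : ℚ) - τ.card) * tpow (-(∑ i ∈ σ \ τ, lb i)) *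
      tpow (-((σ.card : ℚ) - τ.card)) * tpow (-(((d - σ.card : ℕ) : ℚ) * 1)) *
      tpow (∑ i ∈ σ \ τ, lb i) = 1 := by
    simp only [← tpow_add, Nat.cast_sub hσ]
    ring_nf
    exact tpow_zero
  have hpow : (tpow 1 - 1) ^ (d - σ.card) * (tpow 1 - 1) ^ (σ \ τ).card
      = (tpow 1 - 1) ^ (d - τ.card) := by
    rw [← pow_add, Finset.card_sdiff_of_subset hτσ]
    have := Finset.card_le_card hτσ
    congr 1
    omega
  rw [one_sub_tpow_neg_pow, prod_one_sub_tpow_neg_div]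
  linear_combination ((tpow 1 - 1) ^ (d - σ.card) * (tpow 1 - 1) ^ (σ \ τ).card *
    ∏ i ∈ σ \ τ, 1 / (tpow (lb i + 1) - 1)) * hmono +
    (∏ i ∈ σ \ τ, 1 / (tpow (lb i + 1) - 1)) * hpow

theorem stmt_11_general (d r : ℕ) (cones : Finset (Finset (Fin r)))
    (hdim : ∀ σ ∈ cones, σ.card ≤ d)
    (lb : Fin r → ℚ)
    (τ : Finset (Fin r)) :
    tpow ((d : ℚ) - (τ.card : ℚ)) * hTauGen d r cones lb (fun e => tpow (-e)) τ
      = (tpow 1 - 1) ^ (d - τ.card) *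
          ∑ σ ∈ cones, (if τ ⊆ σ then
            ∏ i ∈ σ \ τ, 1 / (tpow (lb i + 1) - 1) else 0) := by
  rw [hTauGen, Finset.mul_sum, Finset.mul_sum]
  refine Finset.sum_congr rfl fun σ hσ => ?_
  split_ifs with hτσ
  · exact tpow_codim_mul_hTauGen_term d lb hτσ (hdim σ hσ)
  · rw [mul_zero, mul_zero]

/-- For the modified `h`-vector `h_τ^λ` one has
`t^{codim τ} h_τ^λ(t⁻¹) = (t-1)^{codim τ} ∑_{σ ⊇ τ} ∏_{ρ_i ⊆ σ∖τ} 1/(t^{λ(b_i)+1} - 1)`,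
as an identity in the field of Hahn series over `ℚ` with rational exponents. -/
theorem stmt_11 (d r : ℕ) (cones : Finset (Finset (Fin r)))
    (hdown : ∀ σ ∈ cones, ∀ τ' ⊆ σ, τ' ∈ cones)
    (hdim : ∀ σ ∈ cones, σ.card ≤ d)
    (lb : Fin r → ℚ) (hlb : ∀ i, -1 < lb i)
    (τ : Finset (Fin r)) (hτ : τ ∈ cones) :
    tpow ((d : ℚ) - (τ.card : ℚ)) * hTauGen d r cones lb (fun e => tpow (-e)) τ
      = (tpow 1 - 1) ^ (d - τ.card) *
          ∑ σ ∈ cones, (if τ ⊆ σ then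
            ∏ i ∈ σ \ τ, 1 / (tpow (lb i + 1) - 1) else 0) :=
  stmt_11_general d r cones hdim lb τ
end

section
/- Let Σ and Δ be complete (or convex-support) simplicial rational fans in N_ℝ with |Σ| = |Δ|, with chosen lattice points b_i (on rays of Σ) and b'_j (on rays of Δ), and associated functions ψ_Σ, ψ_Δ with ψ_Σ(b_i) = 1, ψ_Δ(b'_j) = 1. Let λ be piecewise ℚ-linear with respect to Σ with λ(b_i) > −1, and set λ' = λ + ψ_Σ − ψ_Δ. If λ' is piecewise ℚ-linear with respect to Δ and λ'(b'_j) > −1 for all j, then the weighted δ-vectors agree: δ^λ_Σ(t) = δ^{λ'}_Δ(t). -/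
/-!
Both δ-series count pairs `(m, v)` with `m ≥ 1` and `v ∈ mQ ∩ N`. Writing `m = k + ⌈ψ(v)⌉`,
the exponent `ψ(v) - ⌈ψ(v)⌉ + λ(v) + m` becomes `(ψ + λ)(v) + k`, and since `ψ` is linear on
each cone and positive on its rays, hence positive off the origin, the condition `m ≥ 1` becomes
`k ≥ 1 ∨ v ≠ 0`. The resulting count depends only on the support and on `ψ + λ`, and
`ψ_Σ + λ = ψ_Δ + λ'`.
-/

open scoped Classical

section Cone

variable {d r : ℕ} {v : Fin r → Fin d → ℤ} {σ : Finset (Fin r)}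

lemma smul_ray_mem_coneOf {i : Fin r} (hi : i ∈ σ) {t : ℝ} (ht : 0 ≤ t) :
    (fun j => t * (v i j : ℝ)) ∈ coneOf d r v σ := by
  refine ⟨Pi.single i t, fun k => ?_,
    fun k hk => Pi.single_eq_of_ne (show k ≠ i by rintro rfl; exact hk hi) _,
    fun j => by simp [Pi.single_apply]⟩
  by_cases hk : k = i <;> simp [hk, ht]

lemma exists_eq_sum_of_mem_coneOf {x : Fin d → ℝ} (hx : x ∈ coneOf d r v σ) :
    ∃ c : Fin r → ℝ, (∀ i, 0 ≤ c i) ∧ (∀ i ∉ σ, c i = 0) ∧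
      x = ∑ i, c i • fun j => (v i j : ℝ) := by
  obtain ⟨c, hc, hcσ, hx⟩ := hx
  exact ⟨c, hc, hcσ, funext fun j => by simp [hx j]⟩

variable {ℓ : (Fin d → ℝ) →ₗ[ℝ] ℝ} (hℓ : ∀ i ∈ σ, 0 < ℓ fun j => (v i j : ℝ))
include hℓ

lemma linearMap_nonneg_of_mem_coneOf {x : Fin d → ℝ} (hx : x ∈ coneOf d r v σ) :
    0 ≤ ℓ x := by
  obtain ⟨c, hc, hcσ, rfl⟩ := exists_eq_sum_of_mem_coneOf hx
  simp only [map_sum, map_smul, smul_eq_mul]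
  refine Finset.sum_nonneg fun i _ => ?_
  by_cases hi : i ∈ σ
  · exact mul_nonneg (hc i) (hℓ i hi).le
  · simp [hcσ i hi]

lemma linearMap_pos_of_mem_coneOf {x : Fin d → ℝ} (hx : x ∈ coneOf d r v σ) (hx0 : x ≠ 0) :
    0 < ℓ x := by
  obtain ⟨c, hc, hcσ, rfl⟩ := exists_eq_sum_of_mem_coneOf hx
  obtain ⟨i, -, hci⟩ : ∃ i ∈ Finset.univ, c i ≠ 0 := by
    by_contra! h
    exact hx0 (Finset.sum_eq_zero fun i hi => by simp [h i hi])
  have hiσ : i ∈ σ := by_contra fun hi => hci (hcσ i hi)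
  simp only [map_sum, map_smul, smul_eq_mul]
  refine Finset.sum_pos' (fun k _ => ?_) ⟨i, Finset.mem_univ i,
    mul_pos ((hc i).lt_of_ne' hci) (hℓ i hiσ)⟩
  by_cases hk : k ∈ σ
  · exact mul_nonneg (hc k) (hℓ k hk).le
  · simp [hcσ k hk]

end Cone

section Fan

variable {d r : ℕ} {v : Fin r → Fin d → ℤ} {cones : Finset (Finset (Fin r))}
  {a : Fin r → ℕ} {ψ : (Fin d → ℝ) → ℝ}
  (ha : ∀ i, 0 < a i)
  (hlin : ∀ σ ∈ cones, ∃ ℓ : (Fin d → ℝ) →ₗ[ℝ] ℝ, ∀ x ∈ coneOf d r v σ, ψ x = ℓ x)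
  (hb : ∀ i, ψ (fun j => (a i : ℝ) * (v i j : ℝ)) = 1)
include ha hlin hb

lemma exists_linearMap_eq_psi_pos_on_rays {σ : Finset (Fin r)} (hσ : σ ∈ cones) :
    ∃ ℓ : (Fin d → ℝ) →ₗ[ℝ] ℝ, (∀ x ∈ coneOf d r v σ, ψ x = ℓ x) ∧
      ∀ i ∈ σ, 0 < ℓ fun j => (v i j : ℝ) := by
  obtain ⟨ℓ, hℓ⟩ := hlin σ hσ
  refine ⟨ℓ, hℓ, fun i hi => ?_⟩
  have hai : (0 : ℝ) < a i := Nat.cast_pos.mpr (ha i)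
  have hray : (a i : ℝ) * ℓ (fun j => (v i j : ℝ)) = 1 := by
    rw [← smul_eq_mul, ← map_smul, ← hb i]
    exact (hℓ _ (smul_ray_mem_coneOf hi hai.le)).symm
  exact pos_of_mul_pos_right (hray ▸ one_pos) hai.le

lemma psi_nonneg_of_mem_support {x : Fin d → ℝ} (hx : x ∈ ⋃ σ ∈ cones, coneOf d r v σ) :
    0 ≤ ψ x := by
  obtain ⟨σ, hσ, hxσ⟩ := Set.mem_iUnion₂.mp hx
  obtain ⟨ℓ, hψℓ, hℓ⟩ := exists_linearMap_eq_psi_pos_on_rays ha hlin hb hσ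
  exact hψℓ x hxσ ▸ linearMap_nonneg_of_mem_coneOf hℓ hxσ

lemma psi_pos_iff_of_mem_support {x : Fin d → ℝ} (hx : x ∈ ⋃ σ ∈ cones, coneOf d r v σ) :
    0 < ψ x ↔ x ≠ 0 := by
  obtain ⟨σ, hσ, hxσ⟩ := Set.mem_iUnion₂.mp hx
  obtain ⟨ℓ, hψℓ, hℓ⟩ := exists_linearMap_eq_psi_pos_on_rays ha hlin hb hσ
  rw [hψℓ x hxσ]
  refine ⟨?_, linearMap_pos_of_mem_coneOf hℓ hxσ⟩
  rintro hpos rfl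
  simp at hpos

end Fan

def shiftedDeltaSet {d : ℕ} (S : Set (Fin d → ℝ)) (φ : (Fin d → ℝ) → ℝ) (e : ℚ) :
    Set (ℕ × (Fin d → ℤ)) :=
  {p | (1 ≤ p.1 ∨ p.2 ≠ 0) ∧ (fun j => (p.2 j : ℝ)) ∈ S ∧
    φ (fun j => (p.2 j : ℝ)) + (p.1 : ℝ) = (e : ℝ)}

lemma deltaCoeff_eq_ncard_shiftedDeltaSet {d r : ℕ} {v : Fin r → Fin d → ℤ}
    {cones : Finset (Finset (Fin r))} {ψ lam : (Fin d → ℝ) → ℝ}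
    (hψ_nonneg : ∀ x ∈ ⋃ σ ∈ cones, coneOf d r v σ, 0 ≤ ψ x)
    (hψ_pos : ∀ x ∈ ⋃ σ ∈ cones, coneOf d r v σ, 0 < ψ x ↔ x ≠ 0) (e : ℚ) :
    deltaCoeff d r v cones ψ lam e = (if e = 0 then 1 else 0) +
      ((shiftedDeltaSet (⋃ σ ∈ cones, coneOf d r v σ) (fun x => ψ x + lam x) e).ncard : ℚ) := by
  set shift : ℕ × (Fin d → ℤ) → ℕ × (Fin d → ℤ) :=
    fun p => (p.1 + ⌈ψ (fun j => (p.2 j : ℝ))⌉₊, p.2)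
  have hshift : shift.Injective := by
    rintro ⟨k, w⟩ ⟨k', w'⟩ h
    simp only [shift, Prod.mk.injEq] at h
    obtain ⟨hk, rfl⟩ := h
    simp only [Prod.mk.injEq, and_true]
    omega
  rw [deltaCoeff, ← Set.ncard_image_of_injective (shiftedDeltaSet _ _ e) hshift]
  have hceil_eq_zero : ∀ w : Fin d → ℤ, (fun j => (w j : ℝ)) ∈ ⋃ σ ∈ cones, coneOf d r v σ →
      (⌈ψ fun j => (w j : ℝ)⌉₊ = 0 ↔ w = 0) := fun w hw => by
    rw [Nat.ceil_eq_zero, ← not_lt, hψ_pos _ hw, not_not]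
    simp [funext_iff]
  congr 3
  ext ⟨m, w⟩
  simp only [Set.mem_ofPred_eq, Set.mem_image, shiftedDeltaSet, Prod.exists, shift,
    Prod.mk.injEq, Set.mem_iUnion₂, exists_prop]
  constructor
  · rintro ⟨hm, hw, hle, hexp⟩
    have hw' : (fun j => (w j : ℝ)) ∈ ⋃ σ ∈ cones, coneOf d r v σ := by simpa using hw
    have hceil := natCast_ceil_eq_intCast_ceil (R := ℝ) (hψ_nonneg _ hw')
    have hle' := Nat.ceil_le.mpr hle
    refine ⟨m - ⌈ψ fun j => (w j : ℝ)⌉₊, w, ⟨?_, hw, ?_⟩, Nat.sub_add_cancel hle', rfl⟩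
    · by_cases hw0 : w = 0
      · exact .inl (by rw [(hceil_eq_zero w hw').mpr hw0]; omega)
      · exact .inr hw0
    · rw [Nat.cast_sub hle']
      linarith
  · rintro ⟨k, w, ⟨hk, hw, hexp⟩, rfl, rfl⟩
    have hw' : (fun j => (w j : ℝ)) ∈ ⋃ σ ∈ cones, coneOf d r v σ := by simpa using hw
    have hceil := natCast_ceil_eq_intCast_ceil (R := ℝ) (hψ_nonneg _ hw')
    refine ⟨?_, hw, ?_, ?_⟩
    · rcases hk with hk | hw0
      · omega
      · have := mt (hceil_eq_zero w hw').mp hw0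
        omega
    · push_cast
      linarith [Nat.le_ceil (ψ fun j => (w j : ℝ)), (Nat.cast_nonneg k : (0 : ℝ) ≤ k)]
    · push_cast
      linarith

theorem stmt_15_general (d r₁ r₂ : ℕ)
    (v₁ : Fin r₁ → Fin d → ℤ) (v₂ : Fin r₂ → Fin d → ℤ)
    (cones₁ : Finset (Finset (Fin r₁))) (cones₂ : Finset (Finset (Fin r₂)))
    -- equal convex supports
    (hsupp : (⋃ σ ∈ cones₁, coneOf d r₁ v₁ σ) = ⋃ σ ∈ cones₂, coneOf d r₂ v₂ σ)
    (a₁ : Fin r₁ → ℕ) (ha₁ : ∀ i, 0 < a₁ i)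
    (a₂ : Fin r₂ → ℕ) (ha₂ : ∀ i, 0 < a₂ i)
    (ψ₁ ψ₂ lam : (Fin d → ℝ) → ℝ)
    (hψ₁lin : ∀ σ ∈ cones₁, ∃ ℓ : (Fin d → ℝ) →ₗ[ℝ] ℝ, ∀ x ∈ coneOf d r₁ v₁ σ, ψ₁ x = ℓ x)
    (hψ₁b : ∀ i, ψ₁ (fun j => (a₁ i : ℝ) * (v₁ i j : ℝ)) = 1)
    (hψ₂lin : ∀ σ ∈ cones₂, ∃ ℓ : (Fin d → ℝ) →ₗ[ℝ] ℝ, ∀ x ∈ coneOf d r₂ v₂ σ, ψ₂ x = ℓ x)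
    (hψ₂b : ∀ i, ψ₂ (fun j => (a₂ i : ℝ) * (v₂ i j : ℝ)) = 1) :
    (1 - tpow 1) ^ (d + 1) * mkHahn (deltaCoeff d r₁ v₁ cones₁ ψ₁ lam)
      = (1 - tpow 1) ^ (d + 1) *
          mkHahn (deltaCoeff d r₂ v₂ cones₂ ψ₂
            (fun x => lam x + ψ₁ x - ψ₂ x)) := by
  have hcoeff : deltaCoeff d r₁ v₁ cones₁ ψ₁ lam
      = deltaCoeff d r₂ v₂ cones₂ ψ₂ (fun x => lam x + ψ₁ x - ψ₂ x) := by
    funext e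
    rw [deltaCoeff_eq_ncard_shiftedDeltaSet
        (fun _ hx => psi_nonneg_of_mem_support ha₁ hψ₁lin hψ₁b hx)
        (fun _ hx => psi_pos_iff_of_mem_support ha₁ hψ₁lin hψ₁b hx),
      deltaCoeff_eq_ncard_shiftedDeltaSet
        (fun _ hx => psi_nonneg_of_mem_support ha₂ hψ₂lin hψ₂b hx)
        (fun _ hx => psi_pos_iff_of_mem_support ha₂ hψ₂lin hψ₂b hx), hsupp]
    congr 4
    funext x
    ring
  rw [hcoeff]

/-- Let `Σ` and `Δ` be simplicial rational fans in `N_ℝ` with convex common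
support `|Σ| = |Δ|`, with chosen lattice points `b_i = a_i v_i` (rays of `Σ`) and
`b'_j = a'_j v'_j` (rays of `Δ`), and associated functions `ψ_Σ`, `ψ_Δ`.  Let `λ` be piecewise
`ℚ`-linear with respect to `Σ` with `λ(b_i) > -1` and set `λ' = λ + ψ_Σ - ψ_Δ`.  If `λ'` is
piecewise `ℚ`-linear with respect to `Δ` and `λ'(b'_j) > -1` for all `j`, then the weighted
δ-vectors agree: `δ^λ_Σ(t) = δ^{λ'}_Δ(t)`. -/
theorem stmt_15 (d r₁ r₂ : ℕ)
    (v₁ : Fin r₁ → Fin d → ℤ) (v₂ : Fin r₂ → Fin d → ℤ)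
    (cones₁ : Finset (Finset (Fin r₁))) (cones₂ : Finset (Finset (Fin r₂)))
    (hdown₁ : ∀ σ ∈ cones₁, ∀ τ ⊆ σ, τ ∈ cones₁)
    (hdown₂ : ∀ σ ∈ cones₂, ∀ τ ⊆ σ, τ ∈ cones₂)
    (hindep₁ : ∀ σ ∈ cones₁, LinearIndependent ℝ (fun i : σ => fun j => (v₁ i j : ℝ)))
    (hindep₂ : ∀ σ ∈ cones₂, LinearIndependent ℝ (fun i : σ => fun j => (v₂ i j : ℝ)))
    (hfan₁ : ∀ σ ∈ cones₁, ∀ τ ∈ cones₁,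
      coneOf d r₁ v₁ σ ∩ coneOf d r₁ v₁ τ = coneOf d r₁ v₁ (σ ∩ τ))
    (hfan₂ : ∀ σ ∈ cones₂, ∀ τ ∈ cones₂,
      coneOf d r₂ v₂ σ ∩ coneOf d r₂ v₂ τ = coneOf d r₂ v₂ (σ ∩ τ))
    -- equal convex supports
    (hsupp : (⋃ σ ∈ cones₁, coneOf d r₁ v₁ σ) = ⋃ σ ∈ cones₂, coneOf d r₂ v₂ σ)
    (hconvex : Convex ℝ (⋃ σ ∈ cones₁, coneOf d r₁ v₁ σ))
    (a₁ : Fin r₁ → ℕ) (ha₁ : ∀ i, 0 < a₁ i)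
    (a₂ : Fin r₂ → ℕ) (ha₂ : ∀ i, 0 < a₂ i)
    (ψ₁ ψ₂ lam : (Fin d → ℝ) → ℝ)
    (hψ₁lin : ∀ σ ∈ cones₁, ∃ ℓ : (Fin d → ℝ) →ₗ[ℝ] ℝ, ∀ x ∈ coneOf d r₁ v₁ σ, ψ₁ x = ℓ x)
    (hψ₁b : ∀ i, ψ₁ (fun j => (a₁ i : ℝ) * (v₁ i j : ℝ)) = 1)
    (hψ₂lin : ∀ σ ∈ cones₂, ∃ ℓ : (Fin d → ℝ) →ₗ[ℝ] ℝ, ∀ x ∈ coneOf d r₂ v₂ σ, ψ₂ x = ℓ x)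
    (hψ₂b : ∀ i, ψ₂ (fun j => (a₂ i : ℝ) * (v₂ i j : ℝ)) = 1)
    (hlamlin : ∀ σ ∈ cones₁, ∃ ℓ : (Fin d → ℝ) →ₗ[ℝ] ℝ, ∀ x ∈ coneOf d r₁ v₁ σ, lam x = ℓ x)
    (hlamb : ∀ i, -1 < lam (fun j => (a₁ i : ℝ) * (v₁ i j : ℝ)))
    -- `λ' = λ + ψ_Σ - ψ_Δ` is piecewise `ℚ`-linear with respect to `Δ` …
    (hlam'lin : ∀ σ ∈ cones₂, ∃ ℓ : (Fin d → ℝ) →ₗ[ℝ] ℝ,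
      ∀ x ∈ coneOf d r₂ v₂ σ, lam x + ψ₁ x - ψ₂ x = ℓ x)
    -- … and satisfies `λ'(b'_j) > -1`
    (hlam'b : ∀ i, -1 < lam (fun j => (a₂ i : ℝ) * (v₂ i j : ℝ))
      + ψ₁ (fun j => (a₂ i : ℝ) * (v₂ i j : ℝ))
      - ψ₂ (fun j => (a₂ i : ℝ) * (v₂ i j : ℝ)))
    (hrat : ∀ w : Fin d → ℤ, ∃ c : ℚ,
      ψ₁ (fun j => (w j : ℝ)) + lam (fun j => (w j : ℝ)) = (c : ℝ)) :
    (1 - tpow 1) ^ (d + 1) * mkHahn (deltaCoeff d r₁ v₁ cones₁ ψ₁ lam)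
      = (1 - tpow 1) ^ (d + 1) *
          mkHahn (deltaCoeff d r₂ v₂ cones₂ ψ₂
            (fun x => lam x + ψ₁ x - ψ₂ x)) :=
  stmt_15_general d r₁ r₂ v₁ v₂ cones₁ cones₂ hsupp a₁ ha₁ a₂ ha₂ ψ₁ ψ₂ lam hψ₁lin hψ₁b hψ₂lin hψ₂b
end
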